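/- arXiv:1410.4325 — 6 statements merged into one kernel-verified Lean document; each statement's English description precedes it below -/
import Mathlib

section
/- Let X be a Banach space and A ⊆ X* a subset with closed convex w*-hull equal to the closed unit ball of X*. Then for every x in the unit sphere of X, the infimum over α > 0 of the diameters of the w*-slices S(A, x, α) = {x* ∈ A : x*(x) > sup_{a ∈ A} a(x) − α} equals the infimum over α > 0 of the diameters of the slices S(B_{X*}, x, α). -/
/-!
Evaluation at `x` is w*-continuous and linear, so its supremum over `A` equals its supremum over
the w*-closed convex hull `B_{X*}`, namely `‖x‖ = 1`. Since `A ⊆ B_{X*}`, every slice of `A` lies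
in the slice of the ball with the same `α`. Conversely, fix `β`: a point of the `α`-slice of
`conv A` is a convex combination `a u + b v` with `u ∈ conv S(A, x, β)` and `v` in the convex hull
of the rest of `A`, on which evaluation at `x` is at most `1 - β`; this forces `b ≤ α / β`, so the
point lies within `2α / β` of `conv S(A, x, β)`. The `α`-slice of the ball lies in the w*-closure
of the `α`-slice of `conv A`, and the dual norm is w*-lower semicontinuous, so its diameter is at
most `diam S(A, x, β) + 4α / β`.
-/

open Metric Set Bornology

section ConvexHullSlice

variable {E : Type*} [SeminormedAddCommGroup E] [NormedSpace ℝ E]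

theorem exists_mem_convexHull_slice_norm_sub_le {A : Set E} (hA : IsBounded A) {ℓ : E →ₗ[ℝ] ℝ}
    {M α β : ℝ} (hM : ∀ a ∈ A, ℓ a ≤ M) (hβ : 0 < β) (hαβ : α ≤ β) {p : E}
    (hp : p ∈ convexHull ℝ A) (hpα : M - α < ℓ p) :
    ∃ u ∈ convexHull ℝ {a ∈ A | M - β < ℓ a}, ‖p - u‖ ≤ α / β * diam A := by
  have le_of_mem_convexHull : ∀ {s : Set E} {c : ℝ} {q : E}, q ∈ convexHull ℝ s →
      (∀ a ∈ s, ℓ a ≤ c) → ℓ q ≤ c := fun hq h =>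
    (convex_halfSpace_le ℓ.isLinear _).convexHull_subset_iff.2 h hq
  set S := {a ∈ A | M - β < ℓ a}
  set T := {a ∈ A | ℓ a ≤ M - β}
  have hAST : A = S ∪ T := by
    ext a
    simp only [S, T, mem_union, mem_ofPred_eq, ← and_or_left, iff_self_and]
    exact fun _ => lt_or_ge _ _
  rcases T.eq_empty_or_nonempty with hT | hT
  · refine ⟨p, by rwa [hAST, hT, union_empty] at hp, ?_⟩
    rw [sub_self, norm_zero]
    have hα : 0 ≤ α := by linarith [le_of_mem_convexHull hp hM]
    positivity
  rcases S.eq_empty_or_nonempty with hS | hS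
  · rw [hAST, hS, empty_union] at hp
    linarith [le_of_mem_convexHull hp fun a ha => ha.2]
  rw [hAST, convexHull_union hS hT, mem_convexJoin] at hp
  obtain ⟨u, hu, v, hv, a, b, ha, hb, hab, rfl⟩ := hp
  refine ⟨u, hu, ?_⟩
  have hbβ : b * β ≤ α := by
    have hux := le_of_mem_convexHull hu fun a ha => hM a ha.1
    have hvx := le_of_mem_convexHull hv fun a ha => ha.2
    simp only [map_add, map_smul, smul_eq_mul] at hpα
    have hM' : a * M + b * M = M := by rw [← add_mul, hab, one_mul]
    linarith [mul_le_mul_of_nonneg_left hux ha, mul_le_mul_of_nonneg_left hvx hb]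
  have hvu : ‖v - u‖ ≤ diam A := by
    rw [← dist_eq_norm, ← convexHull_diam]
    exact dist_le_diam_of_mem (isBounded_convexHull.2 hA)
      (convexHull_mono (fun a ha => ha.1) hv) (convexHull_mono (fun a ha => ha.1) hu)
  calc ‖a • u + b • v - u‖ = b * ‖v - u‖ := by
        rw [show a • u + b • v - u = b • (v - u) by
          rw [eq_sub_of_add_eq hab]; module, norm_smul,
          Real.norm_of_nonneg hb]
    _ ≤ α / β * diam A :=
        mul_le_mul ((le_div_iff₀ hβ).2 hbβ) hvu (norm_nonneg _)
          (div_nonneg ((mul_nonneg hb hβ.le).trans hbβ) hβ.le)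

end ConvexHullSlice

theorem csInf_diam_le_csInf_diam {E : Type*} [PseudoMetricSpace E] (s t : ℝ → Set E)
    (h : ∀ β > 0, ∀ ε > 0, ∃ α > 0, diam (s α) ≤ diam (t β) + ε) :
    sInf {d : ℝ | ∃ α : ℝ, 0 < α ∧ d = diam (s α)} ≤
      sInf {d : ℝ | ∃ β : ℝ, 0 < β ∧ d = diam (t β)} := by
  refine le_csInf ⟨_, 1, one_pos, rfl⟩ ?_
  rintro _ ⟨β, hβ, rfl⟩
  refine le_of_forall_pos_le_add fun ε hε => ?_
  obtain ⟨α, hα, hst⟩ := h β hβ ε hε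
  have hbdd : BddBelow {d : ℝ | ∃ α : ℝ, 0 < α ∧ d = diam (s α)} := by
    refine ⟨0, ?_⟩
    rintro _ ⟨_, _, rfl⟩
    exact diam_nonneg
  exact (csInf_le hbdd ⟨α, hα, rfl⟩).trans hst

section WeakDual

open StrongDual

theorem norm_sub_le_of_mem_closure_toWeakDual {𝕜 X : Type*} [NontriviallyNormedField 𝕜]
    [SeminormedAddCommGroup X] [NormedSpace 𝕜 X] {C : Set (StrongDual 𝕜 X)} {D : ℝ}
    (hC : ∀ p ∈ C, ∀ q ∈ C, ‖p - q‖ ≤ D) {f g : StrongDual 𝕜 X}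
    (hf : toWeakDual f ∈ closure (toWeakDual '' C))
    (hg : toWeakDual g ∈ closure (toWeakDual '' C)) :
    ‖f - g‖ ≤ D := by
  obtain ⟨_, p, hp, rfl⟩ := closure_nonempty_iff.1 ⟨_, hf⟩
  refine (f - g).opNorm_le_bound ((norm_nonneg _).trans (hC p hp p hp)) fun y => ?_
  have hclosed : IsClosed {φ : WeakDual 𝕜 X × WeakDual 𝕜 X | ‖φ.1 y - φ.2 y‖ ≤ D * ‖y‖} :=
    isClosed_le (((WeakDual.eval_continuous y).comp continuous_fst).sub
      ((WeakDual.eval_continuous y).comp continuous_snd)).norm continuous_const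
  have hsub : (toWeakDual '' C) ×ˢ (toWeakDual '' C) ⊆
      {φ : WeakDual 𝕜 X × WeakDual 𝕜 X | ‖φ.1 y - φ.2 y‖ ≤ D * ‖y‖} := by
    rintro ⟨_, _⟩ ⟨⟨p, hp, rfl⟩, ⟨q, hq, rfl⟩⟩
    exact ((p - q).le_opNorm y).trans (by gcongr; exact hC p hp q hq)
  have hfg : (toWeakDual f, toWeakDual g) ∈ closure ((toWeakDual '' C) ×ˢ (toWeakDual '' C)) := by
    rw [closure_prod_eq]
    exact ⟨hf, hg⟩
  exact closure_minimal hsub hclosed hfg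

variable {X : Type*} [SeminormedAddCommGroup X] [NormedSpace ℝ X]

theorem subset_of_closure_convexHull_eq {A B : Set (StrongDual ℝ X)}
    (h : closure (toWeakDual '' convexHull ℝ A) = toWeakDual '' B) : A ⊆ B :=
  (subset_convexHull ℝ A).trans
    ((image_subset_image_iff toWeakDual.injective).1 (h ▸ subset_closure))

theorem isGreatest_eval_closedBall (x : X) :
    IsGreatest ((fun g : StrongDual ℝ X => g x) '' closedBall 0 1) ‖x‖ := by
  obtain ⟨g, hg, hgx⟩ := exists_dual_vector'' ℝ x
  refine ⟨⟨g, mem_closedBall_zero_iff.2 hg, hgx⟩, ?_⟩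
  rintro _ ⟨f, hf, rfl⟩
  exact (Real.le_norm_self _).trans ((f.le_opNorm x).trans
    (mul_le_of_le_one_left (norm_nonneg _) (mem_closedBall_zero_iff.1 hf)))

theorem isLUB_eval_of_closure_convexHull_eq {A B : Set (StrongDual ℝ X)}
    (h : closure (toWeakDual '' convexHull ℝ A) = toWeakDual '' B) (x : X) {M : ℝ}
    (hB : IsLUB ((fun g : StrongDual ℝ X => g x) '' B) M) :
    IsLUB ((fun g : StrongDual ℝ X => g x) '' A) M := by
  suffices upperBounds ((fun g : StrongDual ℝ X => g x) '' A) =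
      upperBounds ((fun g : StrongDual ℝ X => g x) '' B) by
    rwa [IsLUB, this]
  ext c
  have hclosed : IsClosed {φ : WeakDual ℝ X | φ x ≤ c} :=
    isClosed_le (WeakDual.eval_continuous x) continuous_const
  have hconvex : Convex ℝ {f : StrongDual ℝ X | f x ≤ c} :=
    convex_halfSpace_le (ContinuousLinearMap.apply ℝ ℝ x).toLinearMap.isLinear c
  simp only [mem_upperBounds, forall_mem_image]
  change A ⊆ {f | f x ≤ c} ↔ B ⊆ {f | f x ≤ c}
  rw [← hconvex.convexHull_subset_iff]
  change convexHull ℝ A ⊆ toWeakDual ⁻¹' {φ : WeakDual ℝ X | φ x ≤ c} ↔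
    B ⊆ toWeakDual ⁻¹' {φ : WeakDual ℝ X | φ x ≤ c}
  rw [← image_subset_iff, ← image_subset_iff, ← hclosed.closure_subset_iff, h]

theorem mem_closure_toWeakDual_image_sep {s : Set (StrongDual ℝ X)} {f : StrongDual ℝ X}
    (hf : toWeakDual f ∈ closure (toWeakDual '' s)) {x : X} {c : ℝ} (hc : c < f x) :
    toWeakDual f ∈ closure (toWeakDual '' {p ∈ s | c < p x}) := by
  have hopen : IsOpen {φ : WeakDual ℝ X | c < φ x} :=
    isOpen_lt continuous_const (WeakDual.eval_continuous x)
  have := hopen.inter_closure ⟨hc, hf⟩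
  rwa [inter_comm, ← image_inter_preimage] at this

theorem norm_sub_le_of_mem_closure_convexHull_slice {A : Set (StrongDual ℝ X)}
    (hA : IsBounded A) {x : X} {M α β : ℝ} (hM : ∀ a ∈ A, a x ≤ M) (hβ : 0 < β) (hαβ : α ≤ β)
    {f g : StrongDual ℝ X} (hf : toWeakDual f ∈ closure (toWeakDual '' convexHull ℝ A))
    (hfx : M - α < f x) (hg : toWeakDual g ∈ closure (toWeakDual '' convexHull ℝ A))
    (hgx : M - α < g x) :
    ‖f - g‖ ≤ diam {a ∈ A | M - β < a x} + 2 * (α / β * diam A) := by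
  refine norm_sub_le_of_mem_closure_toWeakDual ?_ (mem_closure_toWeakDual_image_sep hf hfx)
    (mem_closure_toWeakDual_image_sep hg hgx)
  rintro p ⟨hp, hpx⟩ q ⟨hq, hqx⟩
  let ℓ := (ContinuousLinearMap.apply ℝ ℝ x).toLinearMap
  obtain ⟨u, hu, hpu⟩ := exists_mem_convexHull_slice_norm_sub_le (ℓ := ℓ) hA hM hβ hαβ hp hpx
  obtain ⟨v, hv, hqv⟩ := exists_mem_convexHull_slice_norm_sub_le (ℓ := ℓ) hA hM hβ hαβ hq hqx
  have huv : dist u v ≤ diam {a ∈ A | M - β < a x} := by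
    rw [← convexHull_diam]
    exact dist_le_diam_of_mem (isBounded_convexHull.2 (hA.subset (sep_subset _ _))) hu hv
  rw [← dist_eq_norm]
  linarith [dist_triangle4 p u v q, dist_eq_norm p u, dist_eq_norm' v q]

theorem diam_closedBall_slice_le {A : Set (StrongDual ℝ X)}
    (hA : closure (toWeakDual '' convexHull ℝ A) = toWeakDual '' closedBall 0 1) {x : X}
    {M α β : ℝ} (hM : ∀ a ∈ A, a x ≤ M) (hβ : 0 < β) (hα : 0 ≤ α) (hαβ : α ≤ β) :
    diam {f : StrongDual ℝ X | ‖f‖ ≤ 1 ∧ M - α < f x} ≤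
      diam {a ∈ A | M - β < a x} + 4 * (α / β) := by
  have hAball : A ⊆ closedBall 0 1 := subset_of_closure_convexHull_eq hA
  have hdiam : diam A ≤ 2 := (diam_mono hAball isBounded_closedBall).trans
    ((diam_closedBall zero_le_one).trans (by norm_num))
  have hmem : ∀ {f : StrongDual ℝ X}, ‖f‖ ≤ 1 →
      toWeakDual f ∈ closure (toWeakDual '' convexHull ℝ A) :=
    fun hf => hA ▸ mem_image_of_mem _ (mem_closedBall_zero_iff.2 hf)
  have hαβA : α / β * diam A ≤ α / β * 2 := by gcongr
  refine diam_le_of_forall_dist_le (by positivity) fun f hf g hg => ?_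
  rw [dist_eq_norm]
  refine (norm_sub_le_of_mem_closure_convexHull_slice (isBounded_closedBall.subset hAball)
    hM hβ hαβ (hmem hf.1) hf.2 (hmem hg.1) hg.2).trans ?_
  linarith

end WeakDual

theorem stmt0_general (X : Type*) [NormedAddCommGroup X] [NormedSpace ℝ X]
    (A : Set (X →L[ℝ] ℝ))
    (hA : closure (StrongDual.toWeakDual '' (convexHull ℝ A)) =
      StrongDual.toWeakDual '' (closedBall (0 : X →L[ℝ] ℝ) 1))
    (x : X) (hx : ‖x‖ = 1) :
    sInf {d : ℝ | ∃ α : ℝ, 0 < α ∧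
        d = Metric.diam {f ∈ A | f x > sSup ((fun g : X →L[ℝ] ℝ => g x) '' A) - α}} =
    sInf {d : ℝ | ∃ α : ℝ, 0 < α ∧
        d = Metric.diam {f : X →L[ℝ] ℝ | ‖f‖ ≤ 1 ∧
          f x > sSup ((fun g : X →L[ℝ] ℝ => g x) '' closedBall 0 1) - α}} := by
  have hball : IsGreatest ((fun g : X →L[ℝ] ℝ => g x) '' closedBall 0 1) 1 :=
    hx ▸ isGreatest_eval_closedBall x
  have hlub := isLUB_eval_of_closure_convexHull_eq hA x hball.isLUB
  have hAx : ∀ a ∈ A, a x ≤ 1 := fun a ha => hlub.1 (mem_image_of_mem _ ha)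
  rw [hlub.csSup_eq hlub.nonempty, hball.csSup_eq]
  apply le_antisymm
  · refine csInf_diam_le_csInf_diam _ _ fun β hβ ε hε => ⟨β, hβ, ?_⟩
    refine (diam_mono ?_ ?_).trans (le_add_of_nonneg_right hε.le)
    · exact fun f hf => ⟨mem_closedBall_zero_iff.1 (subset_of_closure_convexHull_eq hA hf.1), hf.2⟩
    · exact isBounded_closedBall.subset fun f hf => mem_closedBall_zero_iff.2 hf.1
  · refine csInf_diam_le_csInf_diam _ _ fun β hβ ε hε => ?_
    refine ⟨β * min ε 1 / 4, by positivity, (diam_closedBall_slice_le hA hAx hβ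
      (by positivity) (by nlinarith [min_le_right ε 1])).trans ?_⟩
    rw [mul_div_assoc, mul_div_cancel_left₀ _ hβ.ne']
    linarith [min_le_left ε 1]

/-- If `A ⊆ X*` has w*-closed convex hull equal to the closed unit ball of
`X*`, then for every `x` in the unit sphere of `X` the infimum over `α > 0` of the diameters
of the w*-slices `S(A, x, α)` equals the infimum over `α > 0` of the diameters of the
w*-slices `S(B_{X*}, x, α)`. -/
theorem stmt0 (X : Type*) [NormedAddCommGroup X] [NormedSpace ℝ X] [CompleteSpace X]
    (A : Set (X →L[ℝ] ℝ))
    (hA : closure (StrongDual.toWeakDual '' (convexHull ℝ A)) =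
      StrongDual.toWeakDual '' (closedBall (0 : X →L[ℝ] ℝ) 1))
    (x : X) (hx : ‖x‖ = 1) :
    sInf {d : ℝ | ∃ α : ℝ, 0 < α ∧
        d = Metric.diam {f ∈ A | f x > sSup ((fun g : X →L[ℝ] ℝ => g x) '' A) - α}} =
    sInf {d : ℝ | ∃ α : ℝ, 0 < α ∧
        d = Metric.diam {f : X →L[ℝ] ℝ | ‖f‖ ≤ 1 ∧
          f x > sSup ((fun g : X →L[ℝ] ℝ => g x) '' closedBall 0 1) - α}} :=
  stmt0_general X A hA x hx
end

section
/- Let T be the tree of finite sequences of natural numbers ordered by extension. For a finitely supported function x : T → ℝ define ‖x‖ as the supremum, over all finite families {S₁,…,Sₙ} of pairwise disjoint finite totally ordered subsets (segments) of T, of (Σᵢ (Σ_{t ∈ Sᵢ} x(t))²)^{1/2}. Then ‖·‖ is a norm on the space of finitely supported real functions on T. -/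
/-!
For a fixed finite family `F` of finite sets, `x ↦ (Σ_{S ∈ F} (Σ_{t ∈ S} x t)²)^{1/2}` is the
Euclidean norm of the vector of segment sums, a linear image of `x`, hence a seminorm. When the
sets of `F` are pairwise disjoint it is bounded by the `ℓ¹` norm `Σₜ |x t|`, so the supremum over
all families of disjoint segments is again a seminorm, and it is `jtNorm`. The one-segment
family `{{t}}` gives `|x t| ≤ jtNorm x`, hence definiteness.
-/

/-- A segment in the tree `T` of finite sequences of naturals: a finite subset that is
totally ordered under the prefix (extension) order. -/
def SegL (S : Finset (List ℕ)) : Prop :=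
  ∀ s ∈ S, ∀ t ∈ S, s <+: t ∨ t <+: s

/-- The `JT_∞` norm of a finitely supported function `x : T → ℝ`: the supremum over all
finite families of pairwise disjoint segments `S₁, …, Sₙ` of `(Σᵢ (Σ_{t ∈ Sᵢ} x t)²)^{1/2}`. -/
noncomputable def jtNorm (x : (List ℕ) →₀ ℝ) : ℝ :=
  sSup {r : ℝ | ∃ F : Finset (Finset (List ℕ)), (∀ S ∈ F, SegL S) ∧
    (∀ S ∈ F, ∀ S' ∈ F, S ≠ S' → Disjoint S S') ∧
    r = Real.sqrt (∑ S ∈ F, (∑ t ∈ S, x t) ^ 2)}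

open Finset

theorem sqrt_sum_sq_le_sum_abs {ι : Type*} (s : Finset ι) (f : ι → ℝ) :
    √(∑ i ∈ s, f i ^ 2) ≤ ∑ i ∈ s, |f i| := by
  refine Real.sqrt_le_iff.2 ⟨sum_nonneg fun _ _ => abs_nonneg _, ?_⟩
  simpa only [sq_abs] using sum_sq_le_sq_sum_of_nonneg fun i _ => abs_nonneg (f i)

theorem Finsupp.sum_abs_le_sum_support_abs {α : Type*} (x : α →₀ ℝ) (s : Finset α) :
    ∑ t ∈ s, |x t| ≤ ∑ t ∈ x.support, |x t| := by
  classical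
  calc ∑ t ∈ s, |x t| = ∑ t ∈ s with x t ≠ 0, |x t| := by
        rw [sum_filter_of_ne]; intro t _ h; simpa using h
    _ ≤ ∑ t ∈ x.support, |x t| :=
        sum_le_sum_of_subset_of_nonneg (fun t ht => by simpa using (mem_filter.1 ht).2)
          fun _ _ _ => abs_nonneg _

section SegmentSums

variable {α : Type*}

noncomputable def segmentSums (F : Finset (Finset α)) : (α →₀ ℝ) →ₗ[ℝ] EuclideanSpace ℝ F where
  toFun x := WithLp.toLp 2 fun S => ∑ t ∈ (S : Finset α), x t
  map_add' x y := by ext S; simp [sum_add_distrib]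
  map_smul' a x := by ext S; simp [mul_sum]

theorem norm_segmentSums (F : Finset (Finset α)) (x : α →₀ ℝ) :
    ‖segmentSums F x‖ = √(∑ S ∈ F, (∑ t ∈ S, x t) ^ 2) := by
  rw [EuclideanSpace.norm_eq, ← sum_coe_sort F]
  simp [segmentSums, sq_abs]

noncomputable def segmentSeminorm (F : Finset (Finset α)) : Seminorm ℝ (α →₀ ℝ) :=
  (normSeminorm ℝ (EuclideanSpace ℝ F)).comp (segmentSums F)

theorem segmentSeminorm_apply (F : Finset (Finset α)) (x : α →₀ ℝ) :
    segmentSeminorm F x = √(∑ S ∈ F, (∑ t ∈ S, x t) ^ 2) :=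
  norm_segmentSums F x

theorem segmentSeminorm_le_sum_abs {F : Finset (Finset α)}
    (hF : ∀ S ∈ F, ∀ S' ∈ F, S ≠ S' → Disjoint S S') (x : α →₀ ℝ) :
    segmentSeminorm F x ≤ ∑ t ∈ x.support, |x t| := by
  classical
  calc segmentSeminorm F x ≤ ∑ S ∈ F, |∑ t ∈ S, x t| := by
        rw [segmentSeminorm_apply]; exact sqrt_sum_sq_le_sum_abs F _
    _ ≤ ∑ S ∈ F, ∑ t ∈ S, |x t| := sum_le_sum fun S _ => abs_sum_le_sum_abs _ _
    _ = ∑ t ∈ F.biUnion id, |x t| := (sum_biUnion hF).symm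
    _ ≤ ∑ t ∈ x.support, |x t| := x.sum_abs_le_sum_support_abs _

end SegmentSums

def IsDisjointSegmentFamily (F : Finset (Finset (List ℕ))) : Prop :=
  (∀ S ∈ F, SegL S) ∧ ∀ S ∈ F, ∀ S' ∈ F, S ≠ S' → Disjoint S S'

theorem isDisjointSegmentFamily_singleton (t : List ℕ) :
    IsDisjointSegmentFamily {{t}} := by
  refine ⟨?_, ?_⟩ <;> simp [SegL]

theorem bddAbove_range_segmentSeminorm :
    BddAbove (Set.range fun F : {F // IsDisjointSegmentFamily F} => segmentSeminorm F.1) :=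
  Seminorm.bddAbove_range_iff.2 fun x =>
    ⟨_, Set.forall_mem_range.2 fun F => segmentSeminorm_le_sum_abs F.2.2 x⟩

noncomputable def jtSeminorm : Seminorm ℝ ((List ℕ) →₀ ℝ) :=
  ⨆ F : {F // IsDisjointSegmentFamily F}, segmentSeminorm F.1

theorem jtSeminorm_apply (x : (List ℕ) →₀ ℝ) :
    jtSeminorm x = ⨆ F : {F // IsDisjointSegmentFamily F}, segmentSeminorm F.1 x :=
  Seminorm.iSup_apply bddAbove_range_segmentSeminorm

theorem jtSeminorm_eq_jtNorm (x : (List ℕ) →₀ ℝ) : jtSeminorm x = jtNorm x := by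
  rw [jtSeminorm_apply, jtNorm, ← sSup_range]
  congr 1
  ext r
  simp [segmentSeminorm_apply, IsDisjointSegmentFamily, eq_comm, and_assoc]

theorem segmentSeminorm_le_jtSeminorm {F : Finset (Finset (List ℕ))}
    (hF : IsDisjointSegmentFamily F) (x : (List ℕ) →₀ ℝ) :
    segmentSeminorm F x ≤ jtSeminorm x :=
  jtSeminorm_apply x ▸
    le_ciSup (Seminorm.bddAbove_range_iff.1 bddAbove_range_segmentSeminorm x) ⟨F, hF⟩

theorem abs_apply_le_jtSeminorm (x : (List ℕ) →₀ ℝ) (t : List ℕ) : |x t| ≤ jtSeminorm x := by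
  simpa [segmentSeminorm_apply, Real.sqrt_sq_eq_abs] using
    segmentSeminorm_le_jtSeminorm (isDisjointSegmentFamily_singleton t) x

theorem jtSeminorm_eq_zero_iff (x : (List ℕ) →₀ ℝ) : jtSeminorm x = 0 ↔ x = 0 := by
  refine ⟨fun h => Finsupp.ext fun t => ?_, fun h => h ▸ map_zero jtSeminorm⟩
  simpa [h] using abs_apply_le_jtSeminorm x t

/-- `jtNorm` is a norm on the space of finitely supported real
functions on the tree `T`. -/
theorem stmt1 :
    (∀ x : (List ℕ) →₀ ℝ, 0 ≤ jtNorm x) ∧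
    (∀ x : (List ℕ) →₀ ℝ, jtNorm x = 0 ↔ x = 0) ∧
    (∀ (a : ℝ) (x : (List ℕ) →₀ ℝ), jtNorm (a • x) = |a| * jtNorm x) ∧
    (∀ x y : (List ℕ) →₀ ℝ, jtNorm (x + y) ≤ jtNorm x + jtNorm y) := by
  simp only [← jtSeminorm_eq_jtNorm]
  exact ⟨apply_nonneg jtSeminorm, jtSeminorm_eq_zero_iff,
    fun a x => by rw [map_smul_eq_mul, Real.norm_eq_abs], map_add_le_add jtSeminorm⟩
end

section
/- The James–Hagler space JH has the strong diameter two property: every convex combination Σᵢ₌₁ⁿ λᵢ S(B_{JH}, xᵢ*, α) of slices of the closed unit ball of JH has diameter 2. -/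
open Metric

def dLe (a b : ℕ × ℕ) : Prop := a.1 ≤ b.1 ∧ b.2 / 2 ^ (b.1 - a.1) = a.2

def IsPQSegD (S : Finset (ℕ × ℕ)) (p q : ℕ) : Prop :=
  (∀ t ∈ S, t.2 < 2 ^ t.1) ∧
  (∀ t ∈ S, p ≤ t.1 ∧ t.1 ≤ q) ∧
  (∀ k : ℕ, p ≤ k → k ≤ q → ∃! t, t ∈ S ∧ t.1 = k) ∧
  (∀ s ∈ S, ∀ t ∈ S, dLe s t ∨ dLe t s)

def AdmissibleD (F : Finset (Finset (ℕ × ℕ))) : Prop :=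
  ∃ p q : ℕ, p ≤ q ∧ (∀ S ∈ F, IsPQSegD S p q) ∧
    ∀ S ∈ F, ∀ S' ∈ F, S ≠ S' → Disjoint S S'

noncomputable def jhNorm (x : (ℕ × ℕ) →₀ ℝ) : ℝ :=
  sSup {r : ℝ | ∃ F : Finset (Finset (ℕ × ℕ)), AdmissibleD F ∧
    r = ∑ S ∈ F, |∑ t ∈ S, x t|}

/-!
Let `u k = 2⁻ᵏ ∑_{j < 2ᵏ} e (k, j)` average the nodes of level `k`; the singletons of level `k`
show `‖u k‖ ≥ 1`. A family of disjoint segments starting at level `p` has at most `2ᵖ` members,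
and each segment meets every level at most once. Hence every sign combination `∑_{k ∈ A} ±u k` has
norm at most `2` (so `f (u k) → 0` for every functional `f`), and if `x` lives on the levels `≤ N`
then `‖x ± u k‖ ≤ max ‖x‖ 1 + 2ᴺ / 2ᵏ`; by density, `‖z ± u k‖ ≤ 1 + o(1)` for every `z` in the
unit ball. So for points `zᵢ` of the slices, `k` large and `ε` small, the points
`(zᵢ ± u k) / (1 + ε)` still lie in the slices, and the two resulting convex combinations are at
distance `2 ‖u k‖ / (1 + ε) ≥ 2 / (1 + ε)`.
-/

open Finset Filter Topology

def dyadicTree : Set (ℕ × ℕ) := {t | t.2 < 2 ^ t.1}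

noncomputable def levelAvg (k : ℕ) : (ℕ × ℕ) →₀ ℝ :=
  Finsupp.onFinset ((range (2 ^ k)).image (k, ·))
    (fun t => if t.1 = k ∧ t.2 < 2 ^ k then ((2 : ℝ) ^ k)⁻¹ else 0) fun t ht => by
      obtain ⟨⟨rfl, h⟩, -⟩ := ite_ne_right_iff.1 ht
      exact mem_image.2 ⟨t.2, mem_range.2 h, rfl⟩

lemma levelAvg_apply (k : ℕ) (t : ℕ × ℕ) :
    levelAvg k t = if t.1 = k ∧ t.2 < 2 ^ k then ((2 : ℝ) ^ k)⁻¹ else 0 := rfl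

lemma levelAvg_apply_of_mem {t : ℕ × ℕ} (ht : t ∈ dyadicTree) (k : ℕ) :
    levelAvg k t = if t.1 = k then ((2 : ℝ) ^ k)⁻¹ else 0 := by
  rw [levelAvg_apply]
  by_cases h : t.1 = k
  · subst h
    rw [if_pos ⟨rfl, ht⟩, if_pos rfl]
  · simp only [h, false_and, if_false]

lemma levelAvg_mem_supported (k : ℕ) : levelAvg k ∈ Finsupp.supported ℝ ℝ dyadicTree := by
  intro t ht
  obtain ⟨⟨rfl, h⟩, -⟩ := ite_ne_right_iff.1 (Finsupp.mem_support_iff.1 ht)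
  exact h

lemma sum_Icc_inv_two_pow_le (p q : ℕ) :
    ∑ j ∈ Icc p q, ((2 : ℝ) ^ j)⁻¹ ≤ 2 * ((2 : ℝ) ^ p)⁻¹ := by
  rw [← Ico_add_one_right_eq_Icc, sum_Ico_eq_sum_range]
  calc ∑ i ∈ range (q + 1 - p), ((2 : ℝ) ^ (p + i))⁻¹
      = ((2 : ℝ) ^ p)⁻¹ * ∑ i ∈ range (q + 1 - p), ((1 : ℝ) / 2) ^ i := by
        rw [mul_sum]
        exact sum_congr rfl fun i _ => by rw [pow_add, mul_inv, one_div, inv_pow]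
    _ ≤ ((2 : ℝ) ^ p)⁻¹ * 2 := by gcongr; exact sum_geometric_two_le _
    _ = 2 * ((2 : ℝ) ^ p)⁻¹ := mul_comm _ _

namespace IsPQSegD

variable {S : Finset (ℕ × ℕ)} {p q : ℕ}

lemma sum_comp_fst (h : IsPQSegD S p q) (c : ℕ → ℝ) :
    ∑ t ∈ S, c t.1 = ∑ j ∈ Icc p q, c j := by
  obtain ⟨-, hlev, huniq, -⟩ := h
  have himage : S.image Prod.fst = Icc p q := by
    ext j
    simp only [mem_image, mem_Icc]
    constructor
    · rintro ⟨t, ht, rfl⟩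
      exact hlev t ht
    · rintro ⟨hp, hq⟩
      obtain ⟨t, ⟨ht, rfl⟩, -⟩ := huniq j hp hq
      exact ⟨t, ht, rfl⟩
  rw [← himage, sum_image]
  intro s hs t ht hst
  obtain ⟨u, -, hu⟩ := huniq s.1 (hlev s hs).1 (hlev s hs).2
  exact (hu s ⟨hs, rfl⟩).trans (hu t ⟨ht, hst.symm⟩).symm

lemma sum_levelAvg (h : IsPQSegD S p q) (k : ℕ) :
    ∑ t ∈ S, levelAvg k t = if k ∈ Icc p q then ((2 : ℝ) ^ k)⁻¹ else 0 := by
  rw [sum_congr rfl fun t ht => levelAvg_apply_of_mem (h.1 t ht) k]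
  exact (h.sum_comp_fst fun j => if j = k then ((2 : ℝ) ^ k)⁻¹ else 0).trans (sum_ite_eq' _ _ _)

end IsPQSegD

section SegmentFamily

variable {F : Finset (Finset (ℕ × ℕ))} {p q : ℕ}

lemma card_le_two_pow_of_isPQSegD (hpq : p ≤ q) (hseg : ∀ S ∈ F, IsPQSegD S p q)
    (hdis : ∀ S ∈ F, ∀ S' ∈ F, S ≠ S' → Disjoint S S') : F.card ≤ 2 ^ p := by
  classical
  calc F.card ≤ (F.biUnion fun S => S.filter (·.1 = p)).card := by
        refine card_le_card_biUnion (fun S hS S' hS' hne => ?_) fun S hS => ?_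
        · exact disjoint_filter_filter (hdis S hS S' hS' hne)
        · obtain ⟨t, ⟨ht, htp⟩, -⟩ := (hseg S hS).2.2.1 p le_rfl hpq
          exact ⟨t, mem_filter.2 ⟨ht, htp⟩⟩
    _ ≤ ((range (2 ^ p)).image (p, ·)).card := card_le_card fun t ht => by
        obtain ⟨S, hS, ht⟩ := mem_biUnion.1 ht
        obtain ⟨htS, htp⟩ := mem_filter.1 ht
        exact mem_image.2 ⟨t.2, mem_range.2 (htp ▸ (hseg S hS).1 t htS), by rw [← htp]⟩
    _ ≤ 2 ^ p := card_image_le.trans (card_range _).le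

lemma sum_abs_sum_levelAvg_le (hpq : p ≤ q) (hseg : ∀ S ∈ F, IsPQSegD S p q)
    (hdis : ∀ S ∈ F, ∀ S' ∈ F, S ≠ S' → Disjoint S S') (k : ℕ) :
    ∑ S ∈ F, |∑ t ∈ S, levelAvg k t| ≤ min 1 ((2 : ℝ) ^ p / 2 ^ k) := by
  have hcard : (F.card : ℝ) ≤ 2 ^ p := by
    exact_mod_cast card_le_two_pow_of_isPQSegD hpq hseg hdis
  rw [sum_congr rfl fun S hS => by rw [(hseg S hS).sum_levelAvg k], sum_const, nsmul_eq_mul]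
  split_ifs with hk
  · rw [abs_of_pos (by positivity), ← div_eq_mul_inv]
    have hpk : (2 : ℝ) ^ p ≤ 2 ^ k := pow_le_pow_right₀ one_le_two (mem_Icc.1 hk).1
    refine le_min ?_ (by gcongr)
    rw [div_le_one (by positivity)]
    exact hcard.trans hpk
  · rw [abs_zero, mul_zero]
    positivity

end SegmentFamily

lemma sum_abs_sum_le_sum_support {F : Finset (Finset (ℕ × ℕ))}
    (hdis : (F : Set (Finset (ℕ × ℕ))).PairwiseDisjoint id) (x : (ℕ × ℕ) →₀ ℝ) :
    ∑ S ∈ F, |∑ t ∈ S, x t| ≤ ∑ t ∈ x.support, |x t| := by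
  calc ∑ S ∈ F, |∑ t ∈ S, x t| ≤ ∑ S ∈ F, ∑ t ∈ S, |x t| :=
        sum_le_sum fun S _ => abs_sum_le_sum_abs _ _
    _ = ∑ t ∈ F.biUnion id, |x t| :=
        (sum_biUnion hdis).symm
    _ ≤ ∑ t ∈ F.biUnion id ∪ x.support, |x t| :=
        sum_le_sum_of_subset_of_nonneg subset_union_left fun _ _ _ => abs_nonneg _
    _ = ∑ t ∈ x.support, |x t| := by
        refine (sum_subset subset_union_right fun t _ ht => ?_).symm
        rw [Finsupp.notMem_support_iff.1 ht, abs_zero]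

lemma le_jhNorm {F : Finset (Finset (ℕ × ℕ))} (hF : AdmissibleD F) (x : (ℕ × ℕ) →₀ ℝ) :
    ∑ S ∈ F, |∑ t ∈ S, x t| ≤ jhNorm x := by
  refine le_csSup ⟨∑ t ∈ x.support, |x t|, ?_⟩ ⟨F, hF, rfl⟩
  rintro r ⟨F', ⟨-, -, -, -, hdis⟩, rfl⟩
  exact sum_abs_sum_le_sum_support (fun S hS S' hS' => hdis S hS S' hS') x

lemma jhNorm_le {x : (ℕ × ℕ) →₀ ℝ} {C : ℝ} (hC : 0 ≤ C)
    (h : ∀ F, AdmissibleD F → ∑ S ∈ F, |∑ t ∈ S, x t| ≤ C) : jhNorm x ≤ C := by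
  refine Real.sSup_le ?_ hC
  rintro r ⟨F, hF, rfl⟩
  exact h F hF

lemma one_le_jhNorm_levelAvg (k : ℕ) : 1 ≤ jhNorm (levelAvg k) := by
  have hsingle : ∀ j ∈ range (2 ^ k), IsPQSegD {(k, j)} k k := fun j hj => by
    refine ⟨by simpa using hj, by simp, fun m hm hm' => ?_, by simp [dLe]⟩
    obtain rfl := le_antisymm hm' hm
    exact ⟨(m, j), ⟨mem_singleton_self _, rfl⟩, fun t ht => mem_singleton.1 ht.1⟩
  have hinj : Set.InjOn (fun j => ({(k, j)} : Finset (ℕ × ℕ))) (range (2 ^ k)) :=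
    fun a _ b _ hab => by simpa using hab
  have hF : AdmissibleD ((range (2 ^ k)).image fun j => {(k, j)}) := by
    refine ⟨k, k, le_rfl, ?_, ?_⟩
    · simpa using hsingle
    · simp only [mem_image]
      rintro _ ⟨a, -, rfl⟩ _ ⟨b, -, rfl⟩ hne
      exact disjoint_singleton.2 fun h => hne (by rw [h])
  refine le_trans (le_of_eq ?_) (le_jhNorm hF _)
  rw [sum_image hinj, sum_congr rfl fun j hj => ?_, sum_const, card_range, nsmul_eq_mul]
  · push_cast
    exact (mul_inv_cancel₀ (by positivity)).symm
  · rw [sum_singleton, levelAvg_apply, if_pos ⟨rfl, mem_range.1 hj⟩, abs_of_pos (by positivity)]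

lemma jhNorm_sum_smul_levelAvg_le (A : Finset ℕ) {c : ℕ → ℝ} (hc : ∀ k, |c k| ≤ 1) :
    jhNorm (∑ k ∈ A, c k • levelAvg k) ≤ 2 := by
  refine jhNorm_le zero_le_two ?_
  rintro F ⟨p, q, hpq, hseg, hdis⟩
  have hsegment : ∀ S ∈ F, |∑ t ∈ S, (∑ k ∈ A, c k • levelAvg k) t| ≤ 2 * ((2 : ℝ) ^ p)⁻¹ := by
    intro S hS
    calc |∑ t ∈ S, (∑ k ∈ A, c k • levelAvg k) t|
        = |∑ k ∈ A, c k * if k ∈ Icc p q then ((2 : ℝ) ^ k)⁻¹ else 0| := by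
          simp only [Finsupp.finsetSum_apply, Finsupp.smul_apply, smul_eq_mul]
          rw [sum_comm]
          simp only [← mul_sum, (hseg S hS).sum_levelAvg]
      _ ≤ ∑ k ∈ A, if k ∈ Icc p q then ((2 : ℝ) ^ k)⁻¹ else 0 := by
          refine (abs_sum_le_sum_abs _ _).trans (sum_le_sum fun k _ => ?_)
          have hnonneg : (0 : ℝ) ≤ if k ∈ Icc p q then ((2 : ℝ) ^ k)⁻¹ else 0 := by
            split_ifs <;> positivity
          rw [abs_mul, abs_of_nonneg hnonneg]
          exact mul_le_of_le_one_left hnonneg (hc k)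
      _ = ∑ k ∈ A ∩ Icc p q, ((2 : ℝ) ^ k)⁻¹ := sum_ite_mem _ _ _
      _ ≤ ∑ k ∈ Icc p q, ((2 : ℝ) ^ k)⁻¹ :=
          sum_le_sum_of_subset_of_nonneg inter_subset_right fun _ _ _ => by positivity
      _ ≤ 2 * ((2 : ℝ) ^ p)⁻¹ := sum_Icc_inv_two_pow_le p q
  have hcard : (F.card : ℝ) ≤ 2 ^ p := by
    exact_mod_cast card_le_two_pow_of_isPQSegD hpq hseg hdis
  calc ∑ S ∈ F, |∑ t ∈ S, (∑ k ∈ A, c k • levelAvg k) t| ≤ F.card * (2 * ((2 : ℝ) ^ p)⁻¹) := by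
        simpa using sum_le_card_nsmul F _ _ hsegment
    _ ≤ 2 ^ p * (2 * ((2 : ℝ) ^ p)⁻¹) := by gcongr
    _ = 2 := by field_simp

lemma jhNorm_add_smul_levelAvg_le {x : (ℕ × ℕ) →₀ ℝ} {N : ℕ} (hN : ∀ t ∈ x.support, t.1 ≤ N)
    (k : ℕ) {r : ℝ} (hr : |r| ≤ 1) :
    jhNorm (x + r • levelAvg k) ≤ max (jhNorm x) 1 + (2 : ℝ) ^ N / 2 ^ k := by
  have hmax : 1 ≤ max (jhNorm x) 1 := le_max_right _ _
  refine jhNorm_le (by positivity) ?_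
  rintro F hF
  obtain ⟨p, q, hpq, hseg, hdis⟩ := hF
  have htriangle : ∑ S ∈ F, |∑ t ∈ S, (x + r • levelAvg k) t|
      ≤ ∑ S ∈ F, |∑ t ∈ S, x t| + ∑ S ∈ F, |∑ t ∈ S, levelAvg k t| := by
    rw [← sum_add_distrib]
    refine sum_le_sum fun S _ => ?_
    simp only [Finsupp.add_apply, Finsupp.smul_apply, smul_eq_mul, sum_add_distrib, ← mul_sum]
    refine (abs_add_le _ _).trans (add_le_add le_rfl ?_)
    rw [abs_mul]
    exact mul_le_of_le_one_left (abs_nonneg _) hr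
  have hlevel := sum_abs_sum_levelAvg_le hpq hseg hdis k
  rcases le_or_gt p N with hpN | hNp
  · have hpow : (2 : ℝ) ^ p / 2 ^ k ≤ 2 ^ N / 2 ^ k := by gcongr; norm_num
    linarith [le_jhNorm ⟨p, q, hpq, hseg, hdis⟩ x, le_max_left (jhNorm x) 1,
      min_le_right 1 ((2 : ℝ) ^ p / 2 ^ k)]
  · -- every segment lies on levels `≥ p > N`, where `x` vanishes
    have hx : ∑ S ∈ F, |∑ t ∈ S, x t| = 0 := sum_eq_zero fun S hS => by
      rw [sum_eq_zero fun t ht => Finsupp.notMem_support_iff.1 fun hxt => ?_, abs_zero]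
      linarith [hN t hxt, ((hseg S hS).2.1 t ht).1]
    have hpow : (0 : ℝ) ≤ 2 ^ N / 2 ^ k := by positivity
    linarith [min_le_left 1 ((2 : ℝ) ^ p / 2 ^ k)]

section Slices

variable {X : Type*} [NormedAddCommGroup X] [NormedSpace ℝ X] {n : ℕ}

def sliceCombination (lam : Fin n → ℝ) (f : Fin n → X →L[ℝ] ℝ) (α : ℝ) : Set X :=
  {y | ∃ z : Fin n → X, (∀ i, ‖z i‖ ≤ 1 ∧ f i (z i) > ‖f i‖ - α) ∧ y = ∑ i, lam i • z i}

lemma exists_mem_slice (f : X →L[ℝ] ℝ) {α : ℝ} (hα : 0 < α) :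
    ∃ z : X, ‖z‖ ≤ 1 ∧ ‖f‖ - α < f z := by
  obtain ⟨z, hz, hfz⟩ := f.exists_lt_apply_of_lt_opNorm (sub_lt_self _ hα)
  rcases le_or_gt 0 (f z) with h | h
  · exact ⟨z, hz.le, by rwa [Real.norm_of_nonneg h] at hfz⟩
  · refine ⟨-z, by rw [norm_neg]; exact hz.le, ?_⟩
    rwa [map_neg, ← abs_of_neg h, ← Real.norm_eq_abs]

variable {lam : Fin n → ℝ} {f : Fin n → X →L[ℝ] ℝ} {α : ℝ}

lemma sliceCombination_subset_closedBall (hlam : ∀ i, 0 ≤ lam i) (hsum : ∑ i, lam i = 1) :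
    sliceCombination lam f α ⊆ closedBall 0 1 := by
  rintro _ ⟨z, hz, rfl⟩
  rw [mem_closedBall_zero_iff, ← hsum]
  refine (norm_sum_le _ _).trans (sum_le_sum fun i _ => ?_)
  rw [norm_smul, Real.norm_of_nonneg (hlam i)]
  exact mul_le_of_le_one_right (hlam i) (hz i).1

lemma diam_sliceCombination_le_two (hlam : ∀ i, 0 ≤ lam i) (hsum : ∑ i, lam i = 1) :
    diam (sliceCombination lam f α) ≤ 2 := by
  refine (diam_mono (sliceCombination_subset_closedBall hlam hsum)
    isBounded_closedBall).trans ?_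
  simpa using diam_closedBall (x := (0 : X)) zero_le_one

lemma smul_add_smul_mem_slice {g : X →L[ℝ] ℝ} {z u : X} {ε r : ℝ} (hε : 0 ≤ ε) (hr : |r| ≤ 1)
    (hgu : |g u| ≤ ε) (hzu : ‖z + r • u‖ ≤ 1 + ε) (hgz : ‖g‖ - α < (g z - ε) / (1 + ε)) :
    ‖(1 + ε)⁻¹ • (z + r • u)‖ ≤ 1 ∧ g ((1 + ε)⁻¹ • (z + r • u)) > ‖g‖ - α := by
  have hpos : 0 < 1 + ε := by linarith
  have hgru : -ε ≤ r * g u := by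
    have : |r * g u| ≤ ε := by
      rw [abs_mul]
      exact (mul_le_of_le_one_left (abs_nonneg _) hr).trans hgu
    linarith [neg_abs_le (r * g u)]
  constructor
  · rw [norm_smul, Real.norm_of_nonneg (by positivity), inv_mul_le_iff₀ hpos, mul_one]
    exact hzu
  · rw [map_smul, map_add, map_smul, smul_eq_mul, smul_eq_mul, inv_mul_eq_div]
    exact hgz.trans_le (by gcongr; linarith)

lemma two_le_diam_sliceCombination (hlam : ∀ i, 0 ≤ lam i) (hsum : ∑ i, lam i = 1)
    (hα : 0 < α)
    (H : ∀ z : Fin n → X, (∀ i, ‖z i‖ ≤ 1) → ∀ ε > 0, ∃ u : X, 1 ≤ ‖u‖ ∧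
      ∀ i, |f i u| ≤ ε ∧ ∀ r : ℝ, |r| ≤ 1 → ‖z i + r • u‖ ≤ 1 + ε) :
    2 ≤ diam (sliceCombination lam f α) := by
  choose z hz hfz using fun i => exists_mem_slice (f i) hα
  refine le_of_forall_lt fun c hc => ?_
  have hsmall : ∀ᶠ ε in 𝓝 (0 : ℝ), c < 2 / (1 + ε) ∧
      ∀ i, ‖f i‖ - α < (f i (z i) - ε) / (1 + ε) :=
    (continuousAt_const.eventually_lt
      (continuousAt_const.div (continuousAt_const.add continuousAt_id) (by norm_num))
      (by simpa using hc)).and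
      (eventually_all.2 fun i =>
        continuousAt_const.eventually_lt
          ((continuousAt_const.sub continuousAt_id).div
            (continuousAt_const.add continuousAt_id) (by norm_num))
          (by simpa using hfz i))
  obtain ⟨ε, hε : 0 < ε, hεc, hεf⟩ :=
    ((eventually_mem_nhdsWithin (s := Set.Ioi 0)).and
      (eventually_nhdsWithin_of_eventually_nhds hsmall)).exists
  obtain ⟨u, hu, hfu⟩ := H z hz ε hε
  let y : ℝ → X := fun r => ∑ i, lam i • (1 + ε)⁻¹ • (z i + r • u)
  have hy : ∀ r : ℝ, |r| ≤ 1 → y r ∈ sliceCombination lam f α := fun r hr =>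
    ⟨_, fun i => smul_add_smul_mem_slice hε.le hr (hfu i).1 ((hfu i).2 r hr) (hεf i), rfl⟩
  have hdiff : y 1 - y (-1) = (2 / (1 + ε)) • u := by
    calc y 1 - y (-1) = ∑ i, lam i • (2 / (1 + ε)) • u := by
          simp only [y, ← sum_sub_distrib, ← smul_sub]
          refine sum_congr rfl fun i _ => ?_
          module
      _ = (2 / (1 + ε)) • u := by rw [← Finset.sum_smul, hsum, one_smul]
  have hdist : 2 / (1 + ε) ≤ dist (y 1) (y (-1)) := by
    rw [dist_eq_norm, hdiff, norm_smul, Real.norm_of_nonneg (by positivity)]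
    exact le_mul_of_one_le_right (by positivity) hu
  calc c < 2 / (1 + ε) := hεc
    _ ≤ dist (y 1) (y (-1)) := hdist
    _ ≤ diam (sliceCombination lam f α) :=
      dist_le_diam_of_mem
        (isBounded_closedBall.subset (sliceCombination_subset_closedBall hlam hsum))
        (hy 1 (by norm_num)) (hy (-1) (by norm_num))

end Slices

section JamesHaglerModel

variable {X : Type*} [NormedAddCommGroup X] [NormedSpace ℝ X]

def IsJHIsometry (e : ℕ × ℕ → X) : Prop :=
  ∀ x ∈ Finsupp.supported ℝ ℝ dyadicTree, ‖Finsupp.linearCombination ℝ e x‖ = jhNorm x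

variable {e : ℕ × ℕ → X}

lemma IsJHIsometry.one_le_norm_levelAvg (he : IsJHIsometry e) (k : ℕ) :
    1 ≤ ‖Finsupp.linearCombination ℝ e (levelAvg k)‖ := by
  rw [he _ (levelAvg_mem_supported k)]
  exact one_le_jhNorm_levelAvg k

lemma IsJHIsometry.summable_abs_apply_levelAvg (he : IsJHIsometry e) (f : X →L[ℝ] ℝ) :
    Summable fun k => |f (Finsupp.linearCombination ℝ e (levelAvg k))| := by
  set a : ℕ → ℝ := fun k => f (Finsupp.linearCombination ℝ e (levelAvg k))
  have hsign : ∀ k, |(SignType.sign (a k) : ℝ)| ≤ 1 := fun k => by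
    rcases SignType.sign (a k) with _ | _ | _ <;> simp
  refine summable_of_sum_le (c := ‖f‖ * 2) (fun k => abs_nonneg (a k)) fun A => ?_
  let v := ∑ k ∈ A, (SignType.sign (a k) : ℝ) • levelAvg k
  have hv : v ∈ Finsupp.supported ℝ ℝ dyadicTree :=
    Submodule.sum_mem _ fun k _ => Submodule.smul_mem _ _ (levelAvg_mem_supported k)
  calc ∑ k ∈ A, |a k| = f (Finsupp.linearCombination ℝ e v) := by
        simp only [v, a, map_sum, map_smul, smul_eq_mul, sign_mul_self]
    _ ≤ ‖f‖ * ‖Finsupp.linearCombination ℝ e v‖ := (Real.le_norm_self _).trans (f.le_opNorm _)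
    _ ≤ ‖f‖ * 2 := by
        gcongr
        rw [he v hv]
        exact jhNorm_sum_smul_levelAvg_le A hsign

lemma IsJHIsometry.eventually_norm_add_smul_levelAvg_le (he : IsJHIsometry e)
    (hdense : Dense (Submodule.span ℝ (e '' dyadicTree) : Set X)) {z : X} (hz : ‖z‖ ≤ 1)
    {ε : ℝ} (hε : 0 < ε) :
    ∀ᶠ k in atTop, ∀ r : ℝ, |r| ≤ 1 →
      ‖z + r • Finsupp.linearCombination ℝ e (levelAvg k)‖ ≤ 1 + ε := by
  obtain ⟨w, hw, hzw⟩ := hdense.exists_dist_lt z (by positivity : 0 < ε / 4)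
  obtain ⟨l, hl, rfl⟩ := (Finsupp.mem_span_image_iff_linearCombination ℝ).1 hw
  obtain ⟨N, hN⟩ : ∃ N, ∀ t ∈ l.support, t.1 ≤ N := ⟨_, fun t ht => le_sup (f := Prod.fst) ht⟩
  have hdecay : Tendsto (fun k : ℕ => (2 : ℝ) ^ N / 2 ^ k) atTop (𝓝 0) := by
    simpa [div_eq_mul_inv, inv_pow] using
      (tendsto_pow_atTop_nhds_zero_of_lt_one (r := (2 : ℝ)⁻¹) (by norm_num) (by norm_num)).const_mul
        ((2 : ℝ) ^ N)
  have hl1 : jhNorm l ≤ 1 + ε / 4 := by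
    rw [← he l hl, ← dist_zero_right]
    linarith [dist_triangle (Finsupp.linearCombination ℝ e l) z 0, dist_comm z
      (Finsupp.linearCombination ℝ e l), dist_zero_right z]
  filter_upwards [hdecay.eventually_le_const (by positivity : (0 : ℝ) < ε / 2)] with k hk r hr
  have hmem : l + r • levelAvg k ∈ Finsupp.supported ℝ ℝ dyadicTree :=
    add_mem hl (Submodule.smul_mem _ _ (levelAvg_mem_supported k))
  calc ‖z + r • Finsupp.linearCombination ℝ e (levelAvg k)‖
      ≤ dist z (Finsupp.linearCombination ℝ e l) + jhNorm (l + r • levelAvg k) := by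
        rw [← he _ hmem, map_add, map_smul, dist_eq_norm]
        exact (norm_add_le _ _).trans_eq' (by abel_nf)
    _ ≤ ε / 4 + (max (jhNorm l) 1 + (2 : ℝ) ^ N / 2 ^ k) :=
        add_le_add hzw.le (jhNorm_add_smul_levelAvg_le hN k hr)
    _ ≤ 1 + ε := by linarith [max_le hl1 (by linarith : (1 : ℝ) ≤ 1 + ε / 4)]

lemma IsJHIsometry.exists_almost_square_direction (he : IsJHIsometry e)
    (hdense : Dense (Submodule.span ℝ (e '' dyadicTree) : Set X)) {n : ℕ} (f : Fin n → X →L[ℝ] ℝ)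
    (z : Fin n → X) (hz : ∀ i, ‖z i‖ ≤ 1) {ε : ℝ} (hε : 0 < ε) :
    ∃ u : X, 1 ≤ ‖u‖ ∧ ∀ i, |f i u| ≤ ε ∧ ∀ r : ℝ, |r| ≤ 1 → ‖z i + r • u‖ ≤ 1 + ε := by
  have hk : ∀ i, ∀ᶠ k in atTop, |f i (Finsupp.linearCombination ℝ e (levelAvg k))| ≤ ε ∧
      ∀ r : ℝ, |r| ≤ 1 → ‖z i + r • Finsupp.linearCombination ℝ e (levelAvg k)‖ ≤ 1 + ε :=
    fun i =>
      ((he.summable_abs_apply_levelAvg (f i)).tendsto_atTop_zero.eventually_le_const hε).and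
        (he.eventually_norm_add_smul_levelAvg_le hdense (hz i) hε)
  obtain ⟨k, hk⟩ := (eventually_all.2 hk).exists
  exact ⟨_, he.one_le_norm_levelAvg k, hk⟩

end JamesHaglerModel

theorem stmt5_general (X : Type*) [NormedAddCommGroup X] [NormedSpace ℝ X]
    (e : ℕ × ℕ → X)
    (hnorm : ∀ x : (ℕ × ℕ) →₀ ℝ, (∀ t ∈ x.support, t.2 < 2 ^ t.1) →
      ‖∑ t ∈ x.support, x t • e t‖ = jhNorm x)
    (hdense : Dense (Submodule.span ℝ (e '' {t : ℕ × ℕ | t.2 < 2 ^ t.1}) : Set X))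
    (n : ℕ)
    (lam : Fin n → ℝ) (hlam : ∀ i, 0 ≤ lam i) (hsum : ∑ i, lam i = 1)
    (xs : Fin n → (X →L[ℝ] ℝ)) (α : ℝ) (hα : 0 < α) :
    Metric.diam {y : X | ∃ z : Fin n → X,
      (∀ i, ‖z i‖ ≤ 1 ∧ xs i (z i) > ‖xs i‖ - α) ∧ y = ∑ i, lam i • z i} = 2 := by
  have he : IsJHIsometry e := fun x hx => by
    rw [Finsupp.linearCombination_apply, Finsupp.sum]
    exact hnorm x ((Finsupp.mem_supported ℝ x).1 hx)
  exact le_antisymm (diam_sliceCombination_le_two hlam hsum)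
    (two_le_diam_sliceCombination hlam hsum hα fun z hz _ hε =>
      he.exists_almost_square_direction hdense xs z hz hε)

/-- The James–Hagler space `JH` has the strong diameter two property:
every convex combination of slices of its closed unit ball has diameter `2`. -/
theorem stmt5 (X : Type*) [NormedAddCommGroup X] [NormedSpace ℝ X] [CompleteSpace X]
    (e : ℕ × ℕ → X)
    (hnorm : ∀ x : (ℕ × ℕ) →₀ ℝ, (∀ t ∈ x.support, t.2 < 2 ^ t.1) →
      ‖∑ t ∈ x.support, x t • e t‖ = jhNorm x)
    (hdense : Dense (Submodule.span ℝ (e '' {t : ℕ × ℕ | t.2 < 2 ^ t.1}) : Set X))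
    (n : ℕ) (hn : 0 < n)
    (lam : Fin n → ℝ) (hlam : ∀ i, 0 ≤ lam i) (hsum : ∑ i, lam i = 1)
    (xs : Fin n → (X →L[ℝ] ℝ)) (α : ℝ) (hα : 0 < α) :
    Metric.diam {y : X | ∃ z : Fin n → X,
      (∀ i, ‖z i‖ ≤ 1 ∧ xs i (z i) > ‖xs i‖ - α) ∧ y = ∑ i, lam i • z i} = 2 :=
  stmt5_general X e hnorm hdense n lam hlam hsum xs α hα
end

section
/- For 0 < ε < 1/4, the element x = (1−ε)e_{(0,0)} + ε e_{(1,0)} − ε e_{(1,1)} − ε e_{(2,0)} − ε e_{(2,1)} − ε e_{(2,2)} + ε e_{(2,3)} has JH-norm exactly 1, and the only admissible family of segments {S₁,…,S_r} with signs λᵢ ∈ {−1,1} satisfying Σᵢ λᵢ f_{Sᵢ}(x) > 1 − α, for 0 < α < min{1−4ε, ε}, is the single segment S₁ = {(0,0),(1,0)} with λ₁ = 1. -/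
open Metric

/-! Off the root, `x` is `±ε` on levels 1 and 2 and `0` on levels `≥ 3`. A family starting at level
`p ≥ 1` has at most `2 ^ p` segments (they are disjoint at level `p`), each meeting at most
`3 - p` of the levels 1 and 2, so its total is at most `4ε < 1`. A family starting at level 0 is
a single segment through the root, worth `1 - ε` plus the entries of `x` along one branch: these
add up to at most `0`, except on the branch `{(0,0), (1,0)}` stopping at level 1, where they
give `ε`. -/

open Finset

section Segment

variable {S : Finset (ℕ × ℕ)} {p q : ℕ}

theorem IsPQSegD.eq_of_fst_eq (hS : IsPQSegD S p q) {s t : ℕ × ℕ} (hs : s ∈ S) (ht : t ∈ S)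
    (h : s.1 = t.1) : s = t := by
  obtain ⟨u, -, hu⟩ := hS.2.2.1 s.1 (hS.2.1 s hs).1 (hS.2.1 s hs).2
  rw [hu s ⟨hs, rfl⟩, hu t ⟨ht, h.symm⟩]

theorem IsPQSegD.injOn_fst (hS : IsPQSegD S p q) : Set.InjOn Prod.fst (S : Set (ℕ × ℕ)) :=
  fun _ hs _ ht h => hS.eq_of_fst_eq hs ht h

theorem IsPQSegD.exists_mem_fst_eq (hS : IsPQSegD S p q) {k : ℕ} (hpk : p ≤ k) (hkq : k ≤ q) :
    ∃ t ∈ S, t.1 = k :=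
  (hS.2.2.1 k hpk hkq).exists

theorem IsPQSegD.card_le (hS : IsPQSegD S p q) : #S ≤ q + 1 - p := by
  simpa using card_le_card_of_injOn Prod.fst (fun t ht => mem_Icc.2 (hS.2.1 t ht)) hS.injOn_fst

theorem IsPQSegD.zero_mem (hS : IsPQSegD S 0 q) : ((0 : ℕ), (0 : ℕ)) ∈ S := by
  obtain ⟨⟨k, n⟩, ht, rfl : k = 0⟩ := hS.exists_mem_fst_eq le_rfl (Nat.zero_le q)
  obtain rfl : n = 0 := by simpa using hS.1 _ ht
  exact ht

theorem IsPQSegD.eq_pair (hS : IsPQSegD S 0 q) (hq : q ≤ 1) (h : ((1 : ℕ), (0 : ℕ)) ∈ S) :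
    S = {(0, 0), (1, 0)} := by
  refine (eq_of_subset_of_card_le ?_ ?_).symm
  · intro t ht
    rcases mem_insert.1 ht with rfl | ht
    exacts [hS.zero_mem, mem_singleton.1 ht ▸ h]
  · have := hS.card_le
    rw [card_pair (by decide)]
    omega

theorem card_le_two_pow {F : Finset (Finset (ℕ × ℕ))} (hpq : p ≤ q)
    (hseg : ∀ S ∈ F, IsPQSegD S p q) (hdis : ∀ S ∈ F, ∀ S' ∈ F, S ≠ S' → Disjoint S S') :
    #F ≤ 2 ^ p := by
  choose! g hgS hg using fun S hS => (hseg S hS).exists_mem_fst_eq le_rfl hpq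
  calc #F ≤ #((range (2 ^ p)).image (Prod.mk p)) := by
        refine card_le_card_of_injOn g (fun S hS => ?_) (fun S hS S' hS' h => ?_)
        · have hlt : (g S).2 < 2 ^ p := by simpa [hg S hS] using (hseg S hS).1 _ (hgS S hS)
          exact mem_image.2 ⟨(g S).2, mem_range.2 hlt, Prod.ext (hg S hS).symm rfl⟩
        · by_contra hne
          exact disjoint_left.1 (hdis S hS S' hS' hne) (hgS S hS) (h ▸ hgS S' hS')
    _ ≤ 2 ^ p := card_image_le.trans (card_range _).le

end Segment

theorem abs_sum_le_card_mul {S : Finset (ℕ × ℕ)} (hS : Set.InjOn Prod.fst (S : Set (ℕ × ℕ)))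
    {y : ℕ × ℕ → ℝ} {L : Finset ℕ} {c : ℝ} (hL : ∀ t ∈ S, y t ≠ 0 → t.1 ∈ L)
    (hc : ∀ t, |y t| ≤ c) : |∑ t ∈ S, y t| ≤ #L * c := by
  classical
  set T := S.filter (·.1 ∈ L)
  have hT : #T ≤ #L :=
    card_le_card_of_injOn Prod.fst (fun t ht => (mem_filter.1 ht).2) (hS.mono (filter_subset _ _))
  calc |∑ t ∈ S, y t| = |∑ t ∈ T, y t| := by rw [sum_filter_of_ne hL]
    _ ≤ ∑ t ∈ T, |y t| := abs_sum_le_sum_abs _ _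
    _ ≤ #T * c := by simpa using sum_le_card_nsmul T _ c fun t _ => hc t
    _ ≤ #L * c := by gcongr; exact (abs_nonneg _).trans (hc 0)

section Example

variable {ε : ℝ}

noncomputable def tailVec (ε : ℝ) : (ℕ × ℕ) →₀ ℝ :=
  Finsupp.single (1, 0) ε - Finsupp.single (1, 1) ε - Finsupp.single (2, 0) ε
    - Finsupp.single (2, 1) ε - Finsupp.single (2, 2) ε + Finsupp.single (2, 3) ε

theorem tailVec_apply_eq_zero {t : ℕ × ℕ} (h : t.1 ∉ Icc 1 2) : tailVec ε t = 0 := by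
  obtain ⟨k, n⟩ := t
  have h1 : 1 ≠ k := by rintro rfl; simp at h
  have h2 : 2 ≠ k := by rintro rfl; simp at h
  simp [tailVec, h1, h2]

theorem abs_tailVec_le (hε : 0 ≤ ε) (t : ℕ × ℕ) : |tailVec ε t| ≤ ε := by
  obtain ⟨k, n⟩ := t
  simp only [tailVec, Finsupp.coe_add, Finsupp.coe_sub, Pi.add_apply, Pi.sub_apply,
    Finsupp.single_apply, Prod.mk.injEq]
  split_ifs <;> first | omega | simp [abs_of_nonneg hε, hε]

theorem sum_tailVec_nonpos_or_eq (hε : 0 ≤ ε) {S : Finset (ℕ × ℕ)} {q : ℕ}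
    (hS : IsPQSegD S 0 q) : ∑ t ∈ S, tailVec ε t ≤ 0 ∨ S = {(0, 0), (1, 0)} := by
  have hlevel : ∀ t ∈ S, t.1 ≤ q := fun t ht => (hS.2.1 t ht).2
  rcases Nat.lt_or_ge q 1 with hq | hq
  · refine Or.inl (sum_eq_zero fun t ht => tailVec_apply_eq_zero ?_).le
    have := hlevel t ht
    simp only [mem_Icc]
    omega
  obtain ⟨⟨_, b⟩, hb, rfl⟩ := hS.exists_mem_fst_eq (Nat.zero_le 1) hq
  have hb2 : b < 2 := by simpa using hS.1 _ hb
  rcases Nat.lt_or_ge q 2 with hq2 | hq2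
  · have hsum : ∑ t ∈ S, tailVec ε t = tailVec ε (1, b) := by
      refine sum_eq_single_of_mem _ hb fun t ht hne => tailVec_apply_eq_zero ?_
      have := hlevel t ht
      have : t.1 ≠ 1 := fun h => hne (hS.eq_of_fst_eq ht hb h)
      simp only [mem_Icc]
      omega
    interval_cases b
    · exact Or.inr (hS.eq_pair (by omega) hb)
    · left
      rw [hsum]
      simp [tailVec, hε]
  · obtain ⟨⟨_, c⟩, hc, rfl⟩ := hS.exists_mem_fst_eq (Nat.zero_le 2) hq2
    have hc4 : c < 4 := by simpa using hS.1 _ hc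
    have hcb : c / 2 = b := by simpa [dLe] using hS.2.2.2 _ hb _ hc
    have hsum : ∑ t ∈ S, tailVec ε t = tailVec ε (1, b) + tailVec ε (2, c) := by
      refine sum_eq_add_of_mem _ _ hb hc (by simp) fun t ht hne => tailVec_apply_eq_zero ?_
      have h1 : t.1 ≠ 1 := fun h => hne.1 (hS.eq_of_fst_eq ht hb h)
      have h2 : t.1 ≠ 2 := fun h => hne.2 (hS.eq_of_fst_eq ht hc h)
      simp only [mem_Icc]
      omega
    subst hcb
    left
    rw [hsum]
    interval_cases c <;> simp [tailVec, hε]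

theorem sum_abs_sum_tailVec_le (hε : 0 ≤ ε) {F : Finset (Finset (ℕ × ℕ))} {p q : ℕ}
    (hp : 1 ≤ p) (hpq : p ≤ q) (hseg : ∀ S ∈ F, IsPQSegD S p q)
    (hdis : ∀ S ∈ F, ∀ S' ∈ F, S ≠ S' → Disjoint S S') :
    ∑ S ∈ F, |∑ t ∈ S, tailVec ε t| ≤ 4 * ε := by
  have hS : ∀ S ∈ F, |∑ t ∈ S, tailVec ε t| ≤ #(Icc p 2) * ε := by
    refine fun S hS => abs_sum_le_card_mul (hseg S hS).injOn_fst (fun t ht hne => ?_)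
      (abs_tailVec_le hε)
    have hpt := ((hseg S hS).2.1 t ht).1
    have := not_not.1 (mt tailVec_apply_eq_zero hne)
    simp only [mem_Icc] at this ⊢
    omega
  have hcount : 2 ^ p * #(Icc p 2) ≤ 4 := by
    rw [Nat.card_Icc]
    rcases (show p = 1 ∨ p = 2 ∨ 3 ≤ p by omega) with rfl | rfl | hp3
    · norm_num
    · norm_num
    · simp [show 2 + 1 - p = 0 by omega]
  calc ∑ S ∈ F, |∑ t ∈ S, tailVec ε t| ≤ #F * (#(Icc p 2) * ε) := by
        simpa using sum_le_card_nsmul F _ _ hS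
    _ ≤ 2 ^ p * (#(Icc p 2) * ε) := by
        gcongr
        exact_mod_cast card_le_two_pow hpq hseg hdis
    _ = ((2 ^ p * #(Icc p 2) : ℕ) : ℝ) * ε := by push_cast; ring
    _ ≤ 4 * ε := by gcongr; exact_mod_cast hcount

noncomputable def xVec (ε : ℝ) : (ℕ × ℕ) →₀ ℝ :=
  Finsupp.single (0, 0) (1 - ε) + tailVec ε

theorem sum_xVec (S : Finset (ℕ × ℕ)) : ∑ t ∈ S, xVec ε t =
    (if ((0 : ℕ), (0 : ℕ)) ∈ S then 1 - ε else 0) + ∑ t ∈ S, tailVec ε t := by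
  simp only [xVec, Finsupp.coe_add, Pi.add_apply, sum_add_distrib, Finsupp.single_apply,
    sum_ite_eq]

theorem sum_xVec_pair : ∑ t ∈ ({(0, 0), (1, 0)} : Finset (ℕ × ℕ)), xVec ε t = 1 := by
  simp [xVec, tailVec]

theorem sum_xVec_of_isPQSegD_zero (hε : 0 ≤ ε) {S : Finset (ℕ × ℕ)} {q : ℕ}
    (hS : IsPQSegD S 0 q) :
    1 - 3 * ε ≤ ∑ t ∈ S, xVec ε t ∧ (S = {(0, 0), (1, 0)} ∨ ∑ t ∈ S, xVec ε t ≤ 1 - ε) := by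
  have htail : |∑ t ∈ S, tailVec ε t| ≤ 2 * ε := by
    simpa using abs_sum_le_card_mul hS.injOn_fst
      (fun t _ hne => not_not.1 (mt tailVec_apply_eq_zero hne)) (abs_tailVec_le hε)
  rw [sum_xVec, if_pos hS.zero_mem]
  refine ⟨by linarith [neg_abs_le (∑ t ∈ S, tailVec ε t)], ?_⟩
  rcases sum_tailVec_nonpos_or_eq hε hS with h | h
  · exact Or.inr (by linarith)
  · exact Or.inl h

theorem isPQSegD_pair : IsPQSegD {(0, 0), (1, 0)} 0 1 := by
  refine ⟨?_, ?_, ?_, ?_⟩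
  · intro t ht; fin_cases ht <;> norm_num
  · intro t ht; fin_cases ht <;> simp
  · intro k h0 h1
    interval_cases k
    · refine ⟨(0, 0), ⟨by simp, rfl⟩, ?_⟩
      rintro t ⟨ht, htk⟩
      fin_cases ht <;> simp_all
    · refine ⟨(1, 0), ⟨by simp, rfl⟩, ?_⟩
      rintro t ⟨ht, htk⟩
      fin_cases ht <;> simp_all
  · intro s hs t ht
    fin_cases hs <;> fin_cases ht <;> norm_num [dLe]

theorem AdmissibleD.sum_abs_sum_xVec_le_or (hε : 0 ≤ ε) {F : Finset (Finset (ℕ × ℕ))}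
    (hF : AdmissibleD F) : ∑ S ∈ F, |∑ t ∈ S, xVec ε t| ≤ 4 * ε ∨ F = ∅ ∨
      ∃ S q, F = {S} ∧ IsPQSegD S 0 q := by
  obtain ⟨p, q, hpq, hseg, hdis⟩ := hF
  rcases Nat.eq_zero_or_pos p with rfl | hp
  · obtain ⟨S, hFS⟩ := card_le_one_iff_subset_singleton.1 (card_le_two_pow hpq hseg hdis)
    rcases subset_singleton_iff.1 hFS with rfl | rfl
    exacts [Or.inr (Or.inl rfl), Or.inr (Or.inr ⟨S, q, rfl, hseg S (mem_singleton_self S)⟩)]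
  · left
    have hroot : ∀ S ∈ F, ((0 : ℕ), (0 : ℕ)) ∉ S := fun S hS h0 =>
      (Nat.lt_irrefl 0 (hp.trans_le ((hseg S hS).2.1 _ h0).1))
    rw [sum_congr rfl fun S hS => by rw [sum_xVec, if_neg (hroot S hS), zero_add]]
    exact sum_abs_sum_tailVec_le hε hp hpq hseg hdis

end Example

theorem stmt8_general (ε : ℝ) (hε0 : 0 < ε)
    (α : ℝ) (hα0 : 0 < α) (hα : α < min (1 - 4 * ε) ε)
    (x : (ℕ × ℕ) →₀ ℝ)
    (hx : x = Finsupp.single ((0 : ℕ), (0 : ℕ)) (1 - ε) + Finsupp.single (1, 0) ε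
      - Finsupp.single (1, 1) ε - Finsupp.single (2, 0) ε - Finsupp.single (2, 1) ε
      - Finsupp.single (2, 2) ε + Finsupp.single (2, 3) ε) :
    jhNorm x = 1 ∧
    ∀ (F : Finset (Finset (ℕ × ℕ))) (σ : Finset (ℕ × ℕ) → ℝ),
      AdmissibleD F → (∀ S ∈ F, σ S = 1 ∨ σ S = -1) →
      (∑ S ∈ F, σ S * ∑ t ∈ S, x t) > 1 - α →
      F = {({((0 : ℕ), (0 : ℕ)), (1, 0)} : Finset (ℕ × ℕ))} ∧
        σ {((0 : ℕ), (0 : ℕ)), (1, 0)} = 1 := by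
  have hα1 : α < 1 - 4 * ε := hα.trans_le (min_le_left _ _)
  have hα2 : α < ε := hα.trans_le (min_le_right _ _)
  obtain rfl : x = xVec ε := by rw [hx, xVec, tailVec]; abel
  clear hx
  refine ⟨IsGreatest.csSup_eq ⟨⟨{{(0, 0), (1, 0)}}, ?_, ?_⟩, ?_⟩, fun F σ hF hσ hgt => ?_⟩
  · exact ⟨0, 1, zero_le_one, by simpa using isPQSegD_pair, by simp⟩
  · rw [sum_singleton, sum_xVec_pair, abs_one]
  · rintro r ⟨F, hF, rfl⟩
    rcases hF.sum_abs_sum_xVec_le_or hε0.le with h | rfl | ⟨S, q, rfl, hS⟩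
    · linarith
    · simp
    · obtain ⟨hlo, rfl | hhi⟩ := sum_xVec_of_isPQSegD_zero hε0.le hS
      · rw [sum_singleton, sum_xVec_pair, abs_one]
      · rw [sum_singleton, abs_le]
        constructor <;> linarith
  have hsigned : ∑ S ∈ F, σ S * ∑ t ∈ S, xVec ε t ≤ ∑ S ∈ F, |∑ t ∈ S, xVec ε t| :=
    sum_le_sum fun S hS => by rcases hσ S hS with h | h <;> simp [h, le_abs_self, neg_le_abs]
  rcases hF.sum_abs_sum_xVec_le_or hε0.le with h | rfl | ⟨S, q, rfl, hS⟩
  · linarith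
  · rw [sum_empty] at hgt
    linarith
  · rw [sum_singleton] at hgt
    obtain ⟨hlo, rfl | hle⟩ := sum_xVec_of_isPQSegD_zero hε0.le hS
    · rcases hσ _ (mem_singleton_self _) with h | h
      · exact ⟨rfl, h⟩
      · rw [h, sum_xVec_pair] at hgt
        linarith
    · rcases hσ S (mem_singleton_self S) with h | h <;> rw [h] at hgt <;> linarith

/-- For `0 < ε < 1/4`, the element
`x = (1-ε)e_{(0,0)} + ε e_{(1,0)} - ε e_{(1,1)} - ε e_{(2,0)} - ε e_{(2,1)} - ε e_{(2,2)} + ε e_{(2,3)}`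
has `JH`-norm exactly `1`, and for `0 < α < min (1 - 4ε) ε` the only admissible family of
segments with signs whose associated functional exceeds `1 - α` at `x` is the single
segment `{(0,0), (1,0)}` with sign `+1`. -/
theorem stmt8 (ε : ℝ) (hε0 : 0 < ε) (hε : ε < 1 / 4)
    (α : ℝ) (hα0 : 0 < α) (hα : α < min (1 - 4 * ε) ε)
    (x : (ℕ × ℕ) →₀ ℝ)
    (hx : x = Finsupp.single ((0 : ℕ), (0 : ℕ)) (1 - ε) + Finsupp.single (1, 0) ε
      - Finsupp.single (1, 1) ε - Finsupp.single (2, 0) ε - Finsupp.single (2, 1) ε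
      - Finsupp.single (2, 2) ε + Finsupp.single (2, 3) ε) :
    jhNorm x = 1 ∧
    ∀ (F : Finset (Finset (ℕ × ℕ))) (σ : Finset (ℕ × ℕ) → ℝ),
      AdmissibleD F → (∀ S ∈ F, σ S = 1 ∨ σ S = -1) →
      (∑ S ∈ F, σ S * ∑ t ∈ S, x t) > 1 - α →
      F = {({((0 : ℕ), (0 : ℕ)), (1, 0)} : Finset (ℕ × ℕ))} ∧
        σ {((0 : ℕ), (0 : ℕ)), (1, 0)} = 1 :=
  stmt8_general ε hε0 α hα0 hα x hx
end

section
/- In JH_∞, let R and S be two disjoint segments in the tree T such that R is a p–q segment and S is a p–r segment with p ≤ q ≤ r. Then ‖f_R − f_S‖_{JH_∞*} ≤ 5/3. -/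
/-!
The bound actually holds with constant `1`. Given a finitely supported `x`, continue the top of
`R` up to level `r` through vertices outside `supp x ∪ S`; this gives a `p–r` segment `R'`
disjoint from `S` with the same `x`-sum as `R`, so `{R', S}` is admissible and
`|f_R x - f_S x| ≤ |f_{R'} x| + |f_S x| ≤ ‖x‖`. Density of the finitely supported vectors
extends the bound to all of `JH_∞`.
-/

open Metric

/-- An `n–m` segment: a nonempty segment whose least element has level (length) `n` and
whose greatest element has level `m`. -/
def IsNMSeg (S : Finset (List ℕ)) (n m : ℕ) : Prop :=
  SegL S ∧ (∀ t ∈ S, n ≤ t.length ∧ t.length ≤ m) ∧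
    (∃ t ∈ S, t.length = n) ∧ (∃ t ∈ S, t.length = m)

/-- An admissible family of segments: pairwise disjoint `n–m` segments for a common pair
`n ≤ m`. -/
def AdmissibleL (F : Finset (Finset (List ℕ))) : Prop :=
  ∃ n m : ℕ, n ≤ m ∧ (∀ S ∈ F, IsNMSeg S n m) ∧
    ∀ S ∈ F, ∀ S' ∈ F, S ≠ S' → Disjoint S S'

/-- The `JH_∞` norm of a finitely supported function on `T`. -/
noncomputable def jhInfNorm (x : (List ℕ) →₀ ℝ) : ℝ :=
  sSup {r : ℝ | ∃ F : Finset (Finset (List ℕ)), AdmissibleL F ∧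
    r = ∑ S ∈ F, |∑ t ∈ S, x t|}

open Finset

lemma jhInfNorm_set_bddAbove (x : (List ℕ) →₀ ℝ) :
    BddAbove {r : ℝ | ∃ F : Finset (Finset (List ℕ)), AdmissibleL F ∧
      r = ∑ S ∈ F, |∑ t ∈ S, x t|} := by
  refine ⟨∑ t ∈ x.support, |x t|, ?_⟩
  rintro v ⟨F, ⟨n, m, -, -, hdisj⟩, rfl⟩
  calc ∑ A ∈ F, |∑ t ∈ A, x t| ≤ ∑ A ∈ F, ∑ t ∈ A, |x t| :=
        sum_le_sum fun A _ => abs_sum_le_sum_abs _ _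
    _ = ∑ t ∈ F.biUnion id, |x t| := (sum_biUnion hdisj).symm
    _ ≤ ∑ t ∈ F.biUnion id ∪ x.support, |x t| :=
        sum_le_sum_of_subset_of_nonneg subset_union_left fun t _ _ => abs_nonneg _
    _ = ∑ t ∈ x.support, |x t| :=
        (sum_subset subset_union_right fun t _ ht => by
          rw [Finsupp.notMem_support_iff.mp ht, abs_zero]).symm

lemma sum_abs_le_jhInfNorm (x : (List ℕ) →₀ ℝ) {F : Finset (Finset (List ℕ))}
    (hF : AdmissibleL F) : ∑ S ∈ F, |∑ t ∈ S, x t| ≤ jhInfNorm x :=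
  le_csSup (jhInfNorm_set_bddAbove x) ⟨F, hF, rfl⟩

lemma segL_of_forall_prefix {S : Finset (List ℕ)} {u : List ℕ} (h : ∀ s ∈ S, s <+: u) :
    SegL S :=
  fun s hs t ht => List.prefix_or_prefix_of_prefix (h s hs) (h t ht)

namespace IsNMSeg

variable {R : Finset (List ℕ)} {p q : ℕ}

lemma le (hR : IsNMSeg R p q) : p ≤ q := by
  obtain ⟨-, hlev, ⟨t, ht, rfl⟩, -⟩ := hR
  exact (hlev t ht).2

lemma nonempty (hR : IsNMSeg R p q) : R.Nonempty :=
  let ⟨t, ht, _⟩ := hR.2.2.1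
  ⟨t, ht⟩

lemma prefix_of_length_eq (hR : IsNMSeg R p q) {u : List ℕ} (hu : u ∈ R)
    (hlen : u.length = q) {s : List ℕ} (hs : s ∈ R) : s <+: u := by
  rcases hR.1 s hs u hu with h | h
  · exact h
  · have := h.length_le
    have := (hR.2.1 s hs).2
    exact h.eq_of_length (by omega) ▸ List.prefix_refl u

/-- The new vertices continue the top of `R` by repetitions of a letter occurring in no word
of `K`. -/
lemma exists_extension (hR : IsNMSeg R p q) {r : ℕ} (hqr : q ≤ r) (K : Finset (List ℕ)) :
    ∃ R', IsNMSeg R' p r ∧ R ⊆ R' ∧ Disjoint (R' \ R) K := by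
  obtain ⟨top, htop, htop_len⟩ := hR.2.2.2
  obtain ⟨b, hb⟩ := Infinite.exists_notMem_finset (K.biUnion List.toFinset)
  set w : ℕ → List ℕ := fun k => top ++ List.replicate k b with hw
  have hw_len : ∀ k, (w k).length = q + k := by simp [hw, htop_len]
  have hw_prefix : ∀ j k, j ≤ k → w j <+: w k := fun j k hjk =>
    ⟨List.replicate (k - j) b, by
      simp only [hw, List.append_assoc, ← List.replicate_add, Nat.add_sub_cancel' hjk]⟩
  have hw_notMem : ∀ k, w k ∉ R → w k ∉ K := by
    intro k hkR hkK
    have hk : k ≠ 0 := by rintro rfl; simp [hw, htop] at hkR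
    exact hb (mem_biUnion.mpr ⟨w k, hkK, List.mem_toFinset.mpr
      (List.mem_append_right _ (List.mem_replicate.mpr ⟨hk, rfl⟩))⟩)
  have hpq := hR.le
  refine ⟨R ∪ (range (r - q + 1)).image w, ⟨?_, ?_, ?_, ?_⟩, subset_union_left, ?_⟩
  · refine segL_of_forall_prefix (u := w (r - q)) fun s hs => ?_
    rcases mem_union.mp hs with hs | hs
    · exact (hR.prefix_of_length_eq htop htop_len hs).trans (List.prefix_append top _)
    · obtain ⟨k, hk, rfl⟩ := mem_image.mp hs
      exact hw_prefix k _ (Nat.lt_succ_iff.mp (mem_range.mp hk))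
  · intro s hs
    rcases mem_union.mp hs with hs | hs
    · exact ⟨(hR.2.1 s hs).1, (hR.2.1 s hs).2.trans hqr⟩
    · obtain ⟨k, hk, rfl⟩ := mem_image.mp hs
      have := mem_range.mp hk
      rw [hw_len]
      omega
  · obtain ⟨s, hs, hs_len⟩ := hR.2.2.1
    exact ⟨s, mem_union_left _ hs, hs_len⟩
  · exact ⟨w (r - q), mem_union_right _ (mem_image_of_mem _ (self_mem_range_succ _)),
      by rw [hw_len]; omega⟩
  · rw [disjoint_left]
    intro s hs
    obtain ⟨hs, hsR⟩ := mem_sdiff.mp hs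
    obtain ⟨k, -, rfl⟩ := mem_image.mp ((mem_union.mp hs).resolve_left hsR)
    exact hw_notMem k hsR

end IsNMSeg

lemma admissibleL_pair {A B : Finset (List ℕ)} {n m : ℕ} (hA : IsNMSeg A n m)
    (hB : IsNMSeg B n m) (hAB : Disjoint A B) : AdmissibleL {A, B} := by
  refine ⟨n, m, hA.le, ?_, ?_⟩
  · simp only [mem_insert, mem_singleton]
    rintro S (rfl | rfl) <;> assumption
  · simp only [mem_insert, mem_singleton]
    rintro S (rfl | rfl) S' (rfl | rfl) hne
    exacts [absurd rfl hne, hAB, hAB.symm, absurd rfl hne]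

lemma abs_add_abs_le_jhInfNorm (x : (List ℕ) →₀ ℝ) {A B : Finset (List ℕ)} {n m : ℕ}
    (hA : IsNMSeg A n m) (hB : IsNMSeg B n m) (hAB : Disjoint A B) :
    |∑ t ∈ A, x t| + |∑ t ∈ B, x t| ≤ jhInfNorm x := by
  have hne : A ≠ B := by
    rintro rfl
    exact hA.nonempty.ne_empty (disjoint_self.mp hAB)
  rw [← sum_pair (f := fun S => |∑ t ∈ S, x t|) hne]
  exact sum_abs_le_jhInfNorm x (admissibleL_pair hA hB hAB)

theorem abs_sum_sub_sum_le_jhInfNorm (x : (List ℕ) →₀ ℝ) {R S : Finset (List ℕ)}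
    {p q r : ℕ} (hR : IsNMSeg R p q) (hS : IsNMSeg S p r) (hqr : q ≤ r)
    (hRS : Disjoint R S) :
    |∑ t ∈ R, x t - ∑ t ∈ S, x t| ≤ jhInfNorm x := by
  obtain ⟨R', hR', hRR', hnew⟩ := hR.exists_extension hqr (x.support ∪ S)
  have hsum : ∑ t ∈ R', x t = ∑ t ∈ R, x t := by
    rw [← sum_sdiff hRR', sum_eq_zero, zero_add]
    exact fun t ht => Finsupp.notMem_support_iff.mp
      fun hsupp => disjoint_left.mp hnew ht (mem_union_left _ hsupp)
  have hR'S : Disjoint R' S := by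
    rw [← union_sdiff_of_subset hRR', disjoint_union_left]
    exact ⟨hRS, hnew.mono_right subset_union_right⟩
  calc |∑ t ∈ R, x t - ∑ t ∈ S, x t| ≤ |∑ t ∈ R, x t| + |∑ t ∈ S, x t| := abs_sub _ _
    _ = |∑ t ∈ R', x t| + |∑ t ∈ S, x t| := by rw [hsum]
    _ ≤ jhInfNorm x := abs_add_abs_le_jhInfNorm x hR' hS hR'S

lemma apply_sum_smul_eq_sum_of_apply_eq_indicator {ι X : Type*} [DecidableEq ι]
    [AddCommMonoid X] [Module ℝ X] (φ : X →ₗ[ℝ] ℝ) (e : ι → X) {A : Finset ι}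
    (hφ : ∀ t, φ (e t) = if t ∈ A then 1 else 0) (c : ι →₀ ℝ) :
    φ (∑ t ∈ c.support, c t • e t) = ∑ t ∈ A, c t := by
  simp only [map_sum, map_smul, hφ, smul_eq_mul, mul_ite, mul_one, mul_zero, sum_ite_mem]
  exact sum_subset inter_subset_right fun t _ ht =>
    Finsupp.notMem_support_iff.mp fun hsupp => ht (mem_inter.mpr ⟨hsupp, ‹_›⟩)

lemma ContinuousLinearMap.opNorm_le_of_dense {E F : Type*} [SeminormedAddCommGroup E]
    [SeminormedAddCommGroup F] [NormedSpace ℝ E] [NormedSpace ℝ F] (f : E →L[ℝ] F)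
    {s : Set E} (hs : Dense s) {C : ℝ} (hC : 0 ≤ C) (h : ∀ y ∈ s, ‖f y‖ ≤ C * ‖y‖) :
    ‖f‖ ≤ C :=
  f.opNorm_le_bound hC fun y =>
    hs.induction (P := fun y => ‖f y‖ ≤ C * ‖y‖) h
      (isClosed_le (by fun_prop) (by fun_prop)) y

theorem stmt9_general (X : Type*) [NormedAddCommGroup X] [NormedSpace ℝ X]
    (e : List ℕ → X)
    (hnorm : ∀ x : (List ℕ) →₀ ℝ, ‖∑ t ∈ x.support, x t • e t‖ = jhInfNorm x)
    (hdense : Dense (Submodule.span ℝ (Set.range e) : Set X))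
    (fS : Finset (List ℕ) → (X →L[ℝ] ℝ))
    (hfS : ∀ S : Finset (List ℕ), SegL S → ∀ t : List ℕ,
      fS S (e t) = if t ∈ S then 1 else 0)
    (R S : Finset (List ℕ)) (p q r : ℕ) (hqr : q ≤ r)
    (hR : IsNMSeg R p q) (hS : IsNMSeg S p r) (hdisj : Disjoint R S) :
    ‖fS R - fS S‖ ≤ 5 / 3 := by
  have hfS_sum : ∀ A, SegL A → ∀ c : List ℕ →₀ ℝ,
      fS A (∑ t ∈ c.support, c t • e t) = ∑ t ∈ A, c t := fun A hA =>
    apply_sum_smul_eq_sum_of_apply_eq_indicator (fS A : X →ₗ[ℝ] ℝ) e (hfS A hA)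
  refine ((fS R - fS S).opNorm_le_of_dense hdense zero_le_one ?_).trans (by norm_num)
  intro y hy
  obtain ⟨c, rfl⟩ := Finsupp.mem_span_range_iff_exists_finsupp.mp hy
  rw [Finsupp.sum, sub_apply, hfS_sum R hR.1, hfS_sum S hS.1, hnorm,
    one_mul, Real.norm_eq_abs]
  exact abs_sum_sub_sum_le_jhInfNorm c hR hS hqr hdisj

/-- In `JH_∞`, if `R` and `S` are disjoint segments with `R` a `p–q`
segment and `S` a `p–r` segment, `p ≤ q ≤ r`, then `‖f_R - f_S‖ ≤ 5/3`. -/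
theorem stmt9 (X : Type*) [NormedAddCommGroup X] [NormedSpace ℝ X] [CompleteSpace X]
    (e : List ℕ → X)
    (hnorm : ∀ x : (List ℕ) →₀ ℝ, ‖∑ t ∈ x.support, x t • e t‖ = jhInfNorm x)
    (hdense : Dense (Submodule.span ℝ (Set.range e) : Set X))
    (fS : Finset (List ℕ) → (X →L[ℝ] ℝ))
    (hfS : ∀ S : Finset (List ℕ), SegL S → ∀ t : List ℕ,
      fS S (e t) = if t ∈ S then 1 else 0)
    (R S : Finset (List ℕ)) (p q r : ℕ) (hpq : p ≤ q) (hqr : q ≤ r)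
    (hR : IsNMSeg R p q) (hS : IsNMSeg S p r) (hdisj : Disjoint R S) :
    ‖fS R - fS S‖ ≤ 5 / 3 :=
  stmt9_general X e hnorm hdense fS hfS R S p q r hqr hR hS hdisj
end

section
/- JH_∞ contains an isometric copy of ℓ₁: if {αₙ} is an infinite sequence of immediate successors of the root ∅ in T, then the closed linear span of {e_{αₙ}} in JH_∞ is isometrically isomorphic to ℓ₁, with {e_{αₙ}} corresponding to the canonical basis. In particular JH_∞ is not isomorphic to JH (which contains no isomorphic copy of ℓ₁). -/
/-!
A singleton `{t}` is a `k–k` segment for `k` the level of `t`, so the singletons of distinct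
nodes of one level form an admissible family, whose sum is `∑ |aᵢ|`; conversely the segments of
an admissible family are pairwise disjoint, so by the triangle inequality no admissible sum
exceeds `∑ |x t|`. Hence `(e (α i))` spans `ℓ¹` isometrically on finite sums, and by
completeness of `X` the map `f ↦ ∑' i, f i • e (α i)` is a linear isometry on all of `ℓ¹`.
-/

open Metric

theorem sum_abs_sum_le_sum_abs_of_pairwiseDisjoint {β : Type*} (F : Finset (Finset β))
    (hF : (F : Set (Finset β)).PairwiseDisjoint id) (x : β →₀ ℝ) :
    ∑ S ∈ F, |∑ t ∈ S, x t| ≤ ∑ t ∈ x.support, |x t| := by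
  classical
  calc ∑ S ∈ F, |∑ t ∈ S, x t| ≤ ∑ S ∈ F, ∑ t ∈ S, |x t| :=
        Finset.sum_le_sum fun S _ => Finset.abs_sum_le_sum_abs _ _
    _ = ∑ t ∈ F.biUnion id with |x t| ≠ 0, |x t| := by
        rw [Finset.sum_filter_ne_zero, Finset.sum_biUnion hF]; rfl
    _ ≤ ∑ t ∈ x.support, |x t| :=
        Finset.sum_le_sum_of_subset_of_nonneg
          (fun t ht => by simpa using (Finset.mem_filter.1 ht).2) fun _ _ _ => abs_nonneg _

theorem AdmissibleL.pairwiseDisjoint {F : Finset (Finset (List ℕ))} (hF : AdmissibleL F) :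
    (F : Set (Finset (List ℕ))).PairwiseDisjoint id := by
  obtain ⟨-, -, -, -, hdisj⟩ := hF
  exact fun S hS S' hS' => hdisj S hS S' hS'

theorem admissibleL_image_singleton (s : Finset (List ℕ)) (k : ℕ)
    (hs : ∀ t ∈ s, t.length = k) : AdmissibleL (s.image singleton) := by
  refine ⟨k, k, le_rfl, ?_, ?_⟩
  · simp only [Finset.mem_image, forall_exists_index, and_imp]
    rintro _ t ht rfl
    have hmem : ∃ u ∈ ({t} : Finset (List ℕ)), u.length = k :=
      ⟨t, Finset.mem_singleton_self t, hs t ht⟩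
    refine ⟨?_, ?_, hmem, hmem⟩
    · simp [SegL]
    · simp [hs t ht]
  · simp only [Finset.mem_image, forall_exists_index, and_imp]
    rintro _ t - rfl _ t' - rfl hne
    exact Finset.disjoint_singleton.2 fun h => hne (by rw [h])

theorem jhInfNorm_eq_sum_abs_of_length_eq (x : List ℕ →₀ ℝ) (k : ℕ)
    (hx : ∀ t ∈ x.support, t.length = k) : jhInfNorm x = ∑ t ∈ x.support, |x t| := by
  refine IsGreatest.csSup_eq ⟨⟨_, admissibleL_image_singleton _ k hx, ?_⟩, ?_⟩
  · rw [Finset.sum_image fun _ _ _ _ h => Finset.singleton_injective h]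
    simp
  · rintro r ⟨F, hF, rfl⟩
    exact sum_abs_sum_le_sum_abs_of_pairwiseDisjoint F hF.pairwiseDisjoint x

theorem Finsupp.sum_embDomain_indicator {ι κ M N : Type*} [Zero M] [AddCommMonoid N]
    (f : ι ↪ κ) (s : Finset ι) (g : ι → M) (h : κ → M → N) (h_zero : ∀ k, h k 0 = 0) :
    ((Finsupp.indicator s fun i _ => g i).embDomain f).sum h = ∑ i ∈ s, h (f i) (g i) := by
  classical
  rw [Finsupp.sum_embDomain,
    Finsupp.sum_of_support_subset _ (Finsupp.support_indicator_subset _ _) _ fun i _ => h_zero _]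
  exact Finset.sum_congr rfl fun i hi => by rw [Finsupp.indicator_of_mem hi]

section LpOne

variable {ι X : Type*} [NormedAddCommGroup X] [NormedSpace ℝ X] [CompleteSpace X]

theorem summable_smul_of_norm_le_one {v : ι → X} (hv : ∀ i, ‖v i‖ ≤ 1)
    (f : lp (fun _ : ι => ℝ) 1) : Summable fun i => f i • v i :=
  Memℓp.summable_of_one <| (lp.memℓp f).mono' fun i => by
    rw [norm_smul]; exact mul_le_of_le_one_right (norm_nonneg _) (hv i)

noncomputable def lpOneSum (v : ι → X) (hv : ∀ i, ‖v i‖ ≤ 1) :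
    lp (fun _ : ι => ℝ) 1 →ₗ[ℝ] X where
  toFun f := ∑' i, f i • v i
  map_add' f g := by
    simp only [lp.coeFn_add, Pi.add_apply, add_smul]
    exact (summable_smul_of_norm_le_one hv f).tsum_add (summable_smul_of_norm_le_one hv g)
  map_smul' c f := by
    simp only [lp.coeFn_smul, Pi.smul_apply, smul_eq_mul, mul_smul, RingHom.id_apply]
    exact (summable_smul_of_norm_le_one hv f).tsum_const_smul c

theorem lpOneSum_single [DecidableEq ι] (v : ι → X) (hv : ∀ i, ‖v i‖ ≤ 1) (i : ι) :
    lpOneSum v hv (lp.single 1 i 1) = v i := by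
  refine (tsum_eq_single i fun j hj => ?_).trans ?_
  · rw [lp.single_apply_ne 1 i 1 hj, zero_smul]
  · rw [lp.single_apply_self, one_smul]

theorem norm_lpOneSum {v : ι → X} (hv : ∀ i, ‖v i‖ ≤ 1)
    (hiso : ∀ (s : Finset ι) (g : ι → ℝ), ‖∑ i ∈ s, g i • v i‖ = ∑ i ∈ s, |g i|)
    (f : lp (fun _ : ι => ℝ) 1) : ‖lpOneSum v hv f‖ = ‖f‖ := by
  have hsum : HasSum (fun i => ‖f i‖) ‖lpOneSum v hv f‖ := by
    refine (summable_smul_of_norm_le_one hv f).hasSum.norm.congr fun s => ?_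
    simp [hiso]
  simpa using hsum.unique (by simpa using lp.hasSum_norm (p := 1) one_pos f)

end LpOne

theorem norm_sum_smul_eq_sum_abs_of_length_eq {ι X : Type*} [NormedAddCommGroup X]
    [NormedSpace ℝ X] (e : List ℕ → X)
    (hnorm : ∀ x : (List ℕ) →₀ ℝ, ‖∑ t ∈ x.support, x t • e t‖ = jhInfNorm x)
    {α : ι → List ℕ} (hα : Function.Injective α) (k : ℕ) (hαk : ∀ i, (α i).length = k)
    (s : Finset ι) (g : ι → ℝ) : ‖∑ i ∈ s, g i • e (α i)‖ = ∑ i ∈ s, |g i| := by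
  classical
  set x := (Finsupp.indicator s fun i _ => g i).embDomain ⟨α, hα⟩
  have hlevel : ∀ t ∈ x.support, t.length = k := by
    simp only [x, Finsupp.support_embDomain, Finset.mem_map]
    rintro _ ⟨i, -, rfl⟩
    exact hαk i
  calc ‖∑ i ∈ s, g i • e (α i)‖ = ‖x.sum fun t c => c • e t‖ := by
        rw [Finsupp.sum_embDomain_indicator _ _ _ (fun t c => c • e t) fun _ => zero_smul _ _]
        rfl
    _ = jhInfNorm x := hnorm x
    _ = x.sum fun _ c => |c| := jhInfNorm_eq_sum_abs_of_length_eq x k hlevel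
    _ = ∑ i ∈ s, |g i| := Finsupp.sum_embDomain_indicator _ _ _ _ fun _ => abs_zero

theorem stmt11_general (X : Type*) [NormedAddCommGroup X] [NormedSpace ℝ X] [CompleteSpace X]
    (e : List ℕ → X)
    (hnorm : ∀ x : (List ℕ) →₀ ℝ, ‖∑ t ∈ x.support, x t • e t‖ = jhInfNorm x)
    (α : ℕ → List ℕ) (hαinj : Function.Injective α)
    (hαsucc : ∀ n : ℕ, (α n).length = 1) :
    (∀ a : ℕ →₀ ℝ, ‖∑ n ∈ a.support, a n • e (α n)‖ = ∑ n ∈ a.support, |a n|) ∧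
    ∃ Φ : lp (fun _ : ℕ => ℝ) 1 →ₗᵢ[ℝ] X, ∀ n : ℕ, Φ (lp.single 1 n 1) = e (α n) := by
  have hiso := norm_sum_smul_eq_sum_abs_of_length_eq e hnorm hαinj 1 hαsucc
  have hv : ∀ n, ‖e (α n)‖ ≤ 1 := fun n => by simpa using (hiso {n} 1).le
  exact ⟨fun a => hiso a.support a, ⟨lpOneSum _ hv, norm_lpOneSum hv hiso⟩, lpOneSum_single _ hv⟩

/-- `JH_∞` contains an isometric copy of `ℓ₁`: if `(αₙ)` is a sequence of
pairwise distinct immediate successors of the root `∅` of `T`, then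
`‖Σₙ aₙ e_{αₙ}‖ = Σₙ |aₙ|` for every finitely supported scalar sequence, and there is a
linear isometry of `ℓ₁` into `JH_∞` sending the canonical basis to `(e_{αₙ})`. -/
theorem stmt11 (X : Type*) [NormedAddCommGroup X] [NormedSpace ℝ X] [CompleteSpace X]
    (e : List ℕ → X)
    (hnorm : ∀ x : (List ℕ) →₀ ℝ, ‖∑ t ∈ x.support, x t • e t‖ = jhInfNorm x)
    (hdense : Dense (Submodule.span ℝ (Set.range e) : Set X))
    (α : ℕ → List ℕ) (hαinj : Function.Injective α)
    (hαsucc : ∀ n : ℕ, (α n).length = 1) :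
    (∀ a : ℕ →₀ ℝ, ‖∑ n ∈ a.support, a n • e (α n)‖ = ∑ n ∈ a.support, |a n|) ∧
    ∃ Φ : lp (fun _ : ℕ => ℝ) 1 →ₗᵢ[ℝ] X, ∀ n : ℕ, Φ (lp.single 1 n 1) = e (α n) :=
  stmt11_general X e hnorm α hαinj hαsucc
end
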